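/- arXiv:2004.02552 — 11 statements merged into one kernel-verified Lean document; each statement's English description precedes it below -/
import Mathlib

section
/- Let n ≥ 2 and consider indices in {1,…,n} circularly (i.e., index arithmetic modulo n). Suppose nonnegative functions η_{i,j}, σ_{i,j} : [0,∞)^n → [0,∞) for neighboring pairs j ∈ {i−1, i+1} and positive constants ℓ_{i,j} > 0 satisfy σ_{i,j}(x) ≤ ℓ_{i,j} η_{i,j}(x) for all x ∈ [0,∞)^n. Assume the small-gain conditions: (i) ℓ_{i,i+1} ℓ_{i+1,i} ≤ 1 for all i, and (ii) there exists k such that ℓ_{k,k+1} ℓ_{k+1,k} ≤ ∏_{i=1}^{n} (ℓ_{i,i+1}/ℓ_{i+1,i}) ≤ 1/(ℓ_{k,k+1} ℓ_{k+1,k}). Define weights λ_i = ∏_{j=k+2}^{i} √(ℓ_{j−1,j}/ℓ_{j,j−1}) for i ∈ {k+1, …, k+n} (so λ_{k+1} = 1, empty product). Then for all x ∈ [0,∞)^n and all i: λ_{i+1} σ_{i+1,i}(x) ≤ λ_i η_{i+1,i}(x) and λ_i σ_{i,i+1}(x) ≤ λ_{i+1} η_{i,i+1}(x). -/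
/-!
Writing `ρ i = ℓ i (i+1) / ℓ (i+1) i`, the weights satisfy `λ (i+1)² = λ i² · ρ i` along the
chain, except across the seam `k → k+1`, where `λ (k+1) = 1` and `λ k² · ρ k` is the full
cyclic product `P = ∏ ρ`. So in both cases `λ i² · ρ i = λ (i+1)² · r` with `r = 1` or `r = P`,
and the required inequalities `λ (i+1) ℓ (i+1) i ≤ λ i` and `λ i ℓ i (i+1) ≤ λ (i+1)` reduce,
after squaring, to `ℓ i (i+1) ℓ (i+1) i ≤ r ≤ 1 / (ℓ i (i+1) ℓ (i+1) i)`, which are exactly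
the two small-gain conditions.
-/

open Fin.NatCast Finset

theorem mul_le_and_mul_le_of_sq_mul_div_eq {a b r u v : ℝ} (ha : 0 < a) (hb : 0 < b) (hu : 0 ≤ u)
    (hv : 0 ≤ v) (hlo : a * b ≤ r) (hhi : r * (a * b) ≤ 1) (h : u ^ 2 * (a / b) = v ^ 2 * r) :
    v * b ≤ u ∧ u * a ≤ v := by
  have h' : u ^ 2 * a = v ^ 2 * r * b := by
    field_simp at h
    linarith
  constructor
  · refine (pow_le_pow_iff_left₀ (by positivity) hu two_ne_zero).mp ?_
    refine le_of_mul_le_mul_right ?_ ha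
    nlinarith [mul_le_mul_of_nonneg_left hlo (by positivity : 0 ≤ v ^ 2 * b)]
  · refine (pow_le_pow_iff_left₀ (by positivity) hv two_ne_zero).mp ?_
    nlinarith [mul_le_mul_of_nonneg_left hhi (sq_nonneg v)]

theorem mul_le_mul_of_le_mul_of_mul_le {α : Type*} [Semiring α] [PartialOrder α]
    [IsOrderedRing α] {c e s u v : α} (hu : 0 ≤ u) (he : 0 ≤ e)
    (hs : s ≤ c * e) (huc : u * c ≤ v) : u * s ≤ v * e :=
  calc u * s ≤ u * (c * e) := mul_le_mul_of_nonneg_left hs hu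
    _ = u * c * e := (mul_assoc u c e).symm
    _ ≤ v * e := mul_le_mul_of_nonneg_right huc he

namespace Fin

variable {n : ℕ} [NeZero n]

theorem exists_lt_add_natCast_eq (k i : Fin n) : ∃ m < n, k + (m : Fin n) = i :=
  ⟨(i - k).val, (i - k).isLt, by rw [cast_val_eq_self]; open Fin.CommRing in ring⟩

theorem add_one_add_natCast_pred (k : Fin n) : k + 1 + ((n - 1 : ℕ) : Fin n) = k := by
  have hn : ((n - 1 : ℕ) : Fin n) + 1 = 0 := by
    rw [← Nat.cast_add_one, Nat.sub_add_cancel (NeZero.one_le), natCast_self]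
  calc k + 1 + ((n - 1 : ℕ) : Fin n) = k + (((n - 1 : ℕ) : Fin n) + 1) := by
        open Fin.CommRing in ring
    _ = k := by rw [hn, add_zero]

end Fin

section CyclicChain

variable {n : ℕ} [NeZero n]

noncomputable def gainRatio (ℓ : Fin n → Fin n → ℝ) (i : Fin n) : ℝ := ℓ i (i + 1) / ℓ (i + 1) i

/-- The paper's `λ_i = ∏_{j=k+2}^{i} √(ℓ_{j-1,j} / ℓ_{j,j-1})`, read at `i = k + 1 + m`. -/
def IsChainWeight (ℓ : Fin n → Fin n → ℝ) (k : Fin n) (lam : Fin n → ℝ) : Prop :=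
  ∀ m : ℕ, m < n →
    lam (k + 1 + (m : Fin n)) = ∏ t ∈ range m, √(gainRatio ℓ (k + 1 + (t : Fin n)))

variable {ℓ : Fin n → Fin n → ℝ} {k : Fin n} {lam : Fin n → ℝ}

theorem gainRatio_pos (ha : ∀ i, 0 < ℓ i (i + 1)) (hb : ∀ i, 0 < ℓ (i + 1) i) (i : Fin n) :
    0 < gainRatio ℓ i :=
  div_pos (ha i) (hb i)

theorem prod_range_gainRatio_add (ℓ : Fin n → Fin n → ℝ) (j : Fin n) :
    ∏ t ∈ range n, gainRatio ℓ (j + (t : Fin n)) = ∏ i, gainRatio ℓ i := by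
  rw [← Fin.prod_univ_eq_prod_range (fun t => gainRatio ℓ (j + (t : Fin n)))]
  simp only [Fin.cast_val_eq_self]
  exact Equiv.prod_comp (Equiv.addLeft j) (gainRatio ℓ)

namespace IsChainWeight

theorem nonneg (hlam : IsChainWeight ℓ k lam) (j : Fin n) : 0 ≤ lam j := by
  obtain ⟨m, hm, rfl⟩ := Fin.exists_lt_add_natCast_eq (k + 1) j
  rw [hlam m hm]
  exact prod_nonneg fun t _ => Real.sqrt_nonneg _

theorem apply_add_one (hlam : IsChainWeight ℓ k lam) : lam (k + 1) = 1 := by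
  simpa using hlam 0 (NeZero.pos n)

theorem sq_eq (hlam : IsChainWeight ℓ k lam) (hpos : ∀ i, 0 < gainRatio ℓ i) {m : ℕ}
    (hm : m < n) :
    lam (k + 1 + (m : Fin n)) ^ 2 = ∏ t ∈ range m, gainRatio ℓ (k + 1 + (t : Fin n)) := by
  rw [hlam m hm, ← Real.sqrt_prod _ fun t _ => (hpos _).le,
    Real.sq_sqrt (prod_nonneg fun t _ => (hpos _).le)]

theorem sq_add_one (hlam : IsChainWeight ℓ k lam) (hpos : ∀ i, 0 < gainRatio ℓ i) {m : ℕ}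
    (hm : m + 1 < n) :
    lam (k + 1 + (m : Fin n)) ^ 2 * gainRatio ℓ (k + 1 + (m : Fin n)) =
      lam (k + 1 + (m : Fin n) + 1) ^ 2 := by
  have hcast : k + 1 + ((m + 1 : ℕ) : Fin n) = k + 1 + (m : Fin n) + 1 := by
    rw [Nat.cast_add_one, ← add_assoc]
  rw [← hcast, hlam.sq_eq hpos hm, prod_range_succ, hlam.sq_eq hpos (by omega)]

theorem sq_mul_gainRatio (hlam : IsChainWeight ℓ k lam) (hpos : ∀ i, 0 < gainRatio ℓ i) :
    lam k ^ 2 * gainRatio ℓ k = ∏ i, gainRatio ℓ i := by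
  obtain ⟨m, hm⟩ : ∃ m, n = m + 1 := Nat.exists_eq_add_one.mpr (NeZero.pos n)
  have hk : k + 1 + (m : Fin n) = k := by
    simpa [hm] using Fin.add_one_add_natCast_pred k
  rw [← prod_range_gainRatio_add ℓ (k + 1), show range n = range (m + 1) by rw [hm],
    prod_range_succ, hk, ← hlam.sq_eq hpos (by omega), hk]

theorem step_le (hlam : IsChainWeight ℓ k lam) (ha : ∀ i, 0 < ℓ i (i + 1))
    (hb : ∀ i, 0 < ℓ (i + 1) i) (hcycle : ∀ i, ℓ i (i + 1) * ℓ (i + 1) i ≤ 1)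
    (hlo : ℓ k (k + 1) * ℓ (k + 1) k ≤ ∏ i, gainRatio ℓ i)
    (hhi : ∏ i, gainRatio ℓ i ≤ 1 / (ℓ k (k + 1) * ℓ (k + 1) k)) (i : Fin n) :
    lam (i + 1) * ℓ (i + 1) i ≤ lam i ∧ lam i * ℓ i (i + 1) ≤ lam (i + 1) := by
  have hpos := gainRatio_pos ha hb
  by_cases hik : i = k
  · subst hik
    refine mul_le_and_mul_le_of_sq_mul_div_eq (ha i) (hb i) (hlam.nonneg i) (hlam.nonneg (i + 1))
      hlo ((le_div_iff₀ (mul_pos (ha i) (hb i))).mp hhi) ?_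
    rw [hlam.apply_add_one, one_pow, one_mul]
    exact hlam.sq_mul_gainRatio hpos
  · obtain ⟨m, hm, rfl⟩ := Fin.exists_lt_add_natCast_eq (k + 1) i
    have hm1 : m + 1 < n := by
      by_contra! hge
      exact hik (by rw [show m = n - 1 by omega]; exact Fin.add_one_add_natCast_pred k)
    refine mul_le_and_mul_le_of_sq_mul_div_eq (r := 1) (ha _) (hb _) (hlam.nonneg _) (hlam.nonneg _)
      (hcycle _) ((one_mul _).trans_le (hcycle _)) ?_
    rw [mul_one]
    exact hlam.sq_add_one hpos hm1

end IsChainWeight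

end CyclicChain

theorem smallgain_weight_inequalities_general
    (n : ℕ) [NeZero n]
    (η σ : Fin n → Fin n → (Fin n → ℝ) → ℝ)
    (hησ_nonneg : ∀ i j : Fin n, (j = i - 1 ∨ j = i + 1) →
      ∀ x : Fin n → ℝ, (∀ l, 0 ≤ x l) → 0 ≤ η i j x ∧ 0 ≤ σ i j x)
    (ℓ : Fin n → Fin n → ℝ)
    (hℓ_pos : ∀ i j : Fin n, (j = i - 1 ∨ j = i + 1) → 0 < ℓ i j)
    (hbound : ∀ i j : Fin n, (j = i - 1 ∨ j = i + 1) →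
      ∀ x : Fin n → ℝ, (∀ l, 0 ≤ x l) → σ i j x ≤ ℓ i j * η i j x)
    (hsg_cycle1 : ∀ i : Fin n, ℓ i (i + 1) * ℓ (i + 1) i ≤ 1)
    (k : Fin n)
    (hsg_cyclen_lo : ℓ k (k + 1) * ℓ (k + 1) k ≤ ∏ i : Fin n, ℓ i (i + 1) / ℓ (i + 1) i)
    (hsg_cyclen_hi : ∏ i : Fin n, ℓ i (i + 1) / ℓ (i + 1) i ≤
      1 / (ℓ k (k + 1) * ℓ (k + 1) k))
    (lam : Fin n → ℝ)
    (hlam : ∀ m : ℕ, m < n →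
      lam (k + 1 + (m : Fin n)) =
        ∏ t ∈ Finset.range m,
          Real.sqrt (ℓ (k + 1 + (t : Fin n)) (k + 1 + (t : Fin n) + 1) /
            ℓ (k + 1 + (t : Fin n) + 1) (k + 1 + (t : Fin n)))) :
    ∀ x : Fin n → ℝ, (∀ l, 0 ≤ x l) → ∀ i : Fin n,
      lam (i + 1) * σ (i + 1) i x ≤ lam i * η (i + 1) i x ∧
      lam i * σ i (i + 1) x ≤ lam (i + 1) * η i (i + 1) x := by
  intro x hx i
  have hpred : i = i + 1 - 1 := (add_sub_cancel_right i 1).symm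
  have hchain : IsChainWeight ℓ k lam := hlam
  obtain ⟨hleft, hright⟩ := hchain.step_le (fun i => hℓ_pos i (i + 1) (Or.inr rfl))
    (fun i => hℓ_pos (i + 1) i (Or.inl (add_sub_cancel_right i 1).symm)) hsg_cycle1
    hsg_cyclen_lo hsg_cyclen_hi i
  exact ⟨mul_le_mul_of_le_mul_of_mul_le (hchain.nonneg _) (hησ_nonneg _ _ (Or.inl hpred) x hx).1
      (hbound _ _ (Or.inl hpred) x hx) hleft,
    mul_le_mul_of_le_mul_of_mul_le (hchain.nonneg _) (hησ_nonneg _ _ (Or.inr rfl) x hx).1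
      (hbound _ _ (Or.inr rfl) x hx) hright⟩

/-- Small-gain weight construction for a circular balancing network.
Indices live in `Fin n` with circular (mod n) arithmetic. Under the componentwise
bounds σ_{i,j} ≤ ℓ_{i,j} η_{i,j} on the nonnegative orthant and the cyclic small-gain
conditions, the weights λ_i = ∏_{j=k+2}^{i} √(ℓ_{j-1,j}/ℓ_{j,j-1}) satisfy the pairwise
balancing inequalities. -/
theorem smallgain_weight_inequalities
    (n : ℕ) [NeZero n] (hn : 2 ≤ n)
    (η σ : Fin n → Fin n → (Fin n → ℝ) → ℝ)
    (hησ_nonneg : ∀ i j : Fin n, (j = i - 1 ∨ j = i + 1) →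
      ∀ x : Fin n → ℝ, (∀ l, 0 ≤ x l) → 0 ≤ η i j x ∧ 0 ≤ σ i j x)
    (ℓ : Fin n → Fin n → ℝ)
    (hℓ_pos : ∀ i j : Fin n, (j = i - 1 ∨ j = i + 1) → 0 < ℓ i j)
    (hbound : ∀ i j : Fin n, (j = i - 1 ∨ j = i + 1) →
      ∀ x : Fin n → ℝ, (∀ l, 0 ≤ x l) → σ i j x ≤ ℓ i j * η i j x)
    (hsg_cycle1 : ∀ i : Fin n, ℓ i (i + 1) * ℓ (i + 1) i ≤ 1)
    (k : Fin n)
    (hsg_cyclen_lo : ℓ k (k + 1) * ℓ (k + 1) k ≤ ∏ i : Fin n, ℓ i (i + 1) / ℓ (i + 1) i)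
    (hsg_cyclen_hi : ∏ i : Fin n, ℓ i (i + 1) / ℓ (i + 1) i ≤
      1 / (ℓ k (k + 1) * ℓ (k + 1) k))
    (lam : Fin n → ℝ)
    (hlam : ∀ m : ℕ, m < n →
      lam (k + 1 + (m : Fin n)) =
        ∏ t ∈ Finset.range m,
          Real.sqrt (ℓ (k + 1 + (t : Fin n)) (k + 1 + (t : Fin n) + 1) /
            ℓ (k + 1 + (t : Fin n) + 1) (k + 1 + (t : Fin n)))) :
    ∀ x : Fin n → ℝ, (∀ l, 0 ≤ x l) → ∀ i : Fin n,
      lam (i + 1) * σ (i + 1) i x ≤ lam i * η (i + 1) i x ∧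
      lam i * σ i (i + 1) x ≤ lam (i + 1) * η i (i + 1) x :=
  smallgain_weight_inequalities_general n η σ hησ_nonneg ℓ hℓ_pos hbound hsg_cycle1 k hsg_cyclen_lo
    hsg_cyclen_hi lam hlam
end

section
/- Let n ≥ 2 with circular indices modulo n. Consider the network ẋ_i = −η_{i−1,i}(x) + σ_{i,i−1}(x) − η_{i+1,i}(x) + σ_{i,i+1}(x) − θ_i(x_i) + κ_i(w_i), i = 1,…,n, where η_{j,i}, σ_{j,i} : [0,∞)^n → [0,∞) are locally Lipschitz with η_{i−1,i}(x) = η_{i+1,i}(x) = 0 whenever x_i = 0, θ_i is of class P and locally Lipschitz, and κ_i is of class K or identically zero. Suppose σ_{i,j}(x) ≤ ℓ_{i,j} η_{i,j}(x) with ℓ_{i,j} > 0 satisfying ℓ_{i,i+1} ℓ_{i+1,i} ≤ 1 for all i and, for some k, ℓ_{k,k+1} ℓ_{k+1,k} ≤ ∏_{i=1}^{n} (ℓ_{i,i+1}/ℓ_{i+1,i}) ≤ 1/(ℓ_{k,k+1} ℓ_{k+1,k}). Define λ_i = ∏_{j=k+2}^{i} √(ℓ_{j−1,j}/ℓ_{j,j−1})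 for i ∈ {k+1,…,k+n}. Then along any differentiable solution x : [0,∞) → [0,∞)^n with measurable locally bounded input w : [0,∞) → [0,∞)^n, the function V(x) = Σ_{i=1}^{n} λ_i x_i satisfies d/dt V(x(t)) ≤ Σ_{i=1}^{n} λ_i (−θ_i(x_i(t)) + κ_i(w_i(t))) for all t ≥ 0. -/
/-!
Write `V = ∑ λᵢ xᵢ`. Along a solution, `dV/dt` is `∑ λᵢ (-θᵢ + κᵢ)` plus the exchange terms, which
group by edges of the cycle: the edge `{i, i+1}` contributes
`λᵢ (σᵢ,ᵢ₊₁ - ηᵢ₊₁,ᵢ) + λᵢ₊₁ (σᵢ₊₁,ᵢ - ηᵢ,ᵢ₊₁)`, and this is `≤ 0` by `σ ≤ ℓ η` as soon as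
`λᵢ ℓᵢ,ᵢ₊₁ ≤ λᵢ₊₁` and `λᵢ₊₁ ℓᵢ₊₁,ᵢ ≤ λᵢ`. The weights are built along the path
`k+1, k+2, …, k` so that `λᵢ₊₁ / λᵢ = √(ℓᵢ,ᵢ₊₁ / ℓᵢ₊₁,ᵢ)` is the geometric mean of the two bounds,
which is admissible because `ℓᵢ,ᵢ₊₁ ℓᵢ₊₁,ᵢ ≤ 1`. On the closing edge `{k, k+1}` the ratio is
fixed by `λₖ₊₁ = 1` instead, and it is admissible exactly by the two-sided bound on the cycle
product.
-/

def IsClassK (f : ℝ → ℝ) : Prop :=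
  ContinuousOn f (Set.Ici 0) ∧ StrictMonoOn f (Set.Ici 0) ∧ f 0 = 0

def IsClassP (f : ℝ → ℝ) : Prop :=
  ContinuousOn f (Set.Ici 0) ∧ f 0 = 0 ∧ ∀ s : ℝ, 0 < s → 0 < f s

open Fin.NatCast

theorem edge_exchange_nonpos {wi wj eij eji sij sji lij lji : ℝ} (hwi : 0 ≤ wi) (hwj : 0 ≤ wj)
    (heij : 0 ≤ eij) (heji : 0 ≤ eji) (hsij : sij ≤ lij * eij) (hsji : sji ≤ lji * eji)
    (hij : wi * lij ≤ wj) (hji : wj * lji ≤ wi) :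
    wi * (sij - eji) + wj * (sji - eij) ≤ 0 := by
  nlinarith [mul_le_mul_of_nonneg_left hsij hwi, mul_le_mul_of_nonneg_left hsji hwj,
    mul_le_mul_of_nonneg_right hij heij, mul_le_mul_of_nonneg_right hji heji]

theorem sum_exchange_nonpos {n : ℕ} [NeZero n] {lam : Fin n → ℝ} {E S L : Fin n → Fin n → ℝ}
    (hlam : ∀ i, 0 ≤ lam i) (hE : ∀ i, 0 ≤ E i (i + 1) ∧ 0 ≤ E (i + 1) i)
    (hS : ∀ i, S i (i + 1) ≤ L i (i + 1) * E i (i + 1) ∧ S (i + 1) i ≤ L (i + 1) i * E (i + 1) i)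
    (hbal : ∀ i, lam i * L i (i + 1) ≤ lam (i + 1) ∧ lam (i + 1) * L (i + 1) i ≤ lam i) :
    ∑ i, lam i * (-E (i - 1) i + S i (i - 1) - E (i + 1) i + S i (i + 1)) ≤ 0 := by
  have hshift : ∑ i, lam i * (S i (i - 1) - E (i - 1) i) =
      ∑ i, lam (i + 1) * (S (i + 1) i - E i (i + 1)) := by
    rw [← Equiv.sum_comp (Equiv.addRight (1 : Fin n)) fun i => lam i * (S i (i - 1) - E (i - 1) i)]
    simp only [Equiv.coe_addRight, add_sub_cancel_right]
  calc ∑ i, lam i * (-E (i - 1) i + S i (i - 1) - E (i + 1) i + S i (i + 1))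
      = ∑ i, (lam i * (S i (i + 1) - E (i + 1) i) + lam (i + 1) * (S (i + 1) i - E i (i + 1))) := by
        rw [Finset.sum_add_distrib, ← hshift, ← Finset.sum_add_distrib]
        exact Finset.sum_congr rfl fun i _ => by ring
    _ ≤ 0 := Finset.sum_nonpos fun i _ =>
        edge_exchange_nonpos (hlam i) (hlam (i + 1)) (hE i).1 (hE i).2 (hS i).1 (hS i).2
          (hbal i).1 (hbal i).2

theorem mul_le_mul_sqrt_div_and_mul_sqrt_div_mul_le_of_mul_le_one {a b w : ℝ}
    (ha : 0 < a) (hb : 0 < b) (hab : a * b ≤ 1) (hw : 0 ≤ w) :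
    w * a ≤ w * √(a / b) ∧ w * √(a / b) * b ≤ w := by
  have hsqrt : √(a / b) * b = √(a * b) := by
    rw [show a * b = a / b * b ^ 2 by field_simp, Real.sqrt_mul (by positivity), Real.sqrt_sq hb.le]
  constructor
  · refine mul_le_mul_of_nonneg_left ((Real.le_sqrt ha.le (by positivity)).2 ?_) hw
    rw [le_div_iff₀ hb]
    nlinarith
  · rw [mul_assoc, hsqrt]
    exact mul_le_of_le_one_right hw (Real.sqrt_le_one.2 hab)

theorem sqrt_mul_le_one_and_le_sqrt_of_le_mul_div {a b Q : ℝ} (ha : 0 < a) (hb : 0 < b)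
    (hlo : a * b ≤ Q * (a / b)) (hhi : Q * (a / b) ≤ 1 / (a * b)) :
    √Q * a ≤ 1 ∧ b ≤ √Q := by
  have hQ : 0 ≤ Q := (pos_of_mul_pos_left ((mul_pos ha hb).trans_le hlo) (div_pos ha hb).le).le
  constructor
  · rw [← Real.sqrt_sq ha.le, ← Real.sqrt_mul hQ, Real.sqrt_le_one]
    rw [le_div_iff₀ (mul_pos ha hb)] at hhi
    calc Q * a ^ 2 = Q * (a / b) * (a * b) := by field_simp
      _ ≤ 1 := hhi
  · rw [Real.le_sqrt' hb]
    calc b ^ 2 = a * b * (b / a) := by field_simp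
      _ ≤ Q * (a / b) * (b / a) := by gcongr
      _ = Q := by field_simp

theorem Fin.exists_lt_add_natCast_eq_s1 {n : ℕ} [NeZero n] (j i : Fin n) :
    ∃ m < n, j + (m : Fin n) = i :=
  ⟨(i - j).val, (i - j).isLt, by simp⟩

theorem Fin.prod_univ_eq_prod_range_add {M : Type*} [CommMonoid M] {n : ℕ} [NeZero n]
    (f : Fin n → M) (j : Fin n) : ∏ i, f i = ∏ m ∈ Finset.range n, f (j + (m : Fin n)) := by
  rw [← Equiv.prod_comp (Equiv.addLeft j) f,
    ← Fin.prod_univ_eq_prod_range (fun m => f (j + (m : Fin n)))]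
  simp

theorem Fin.natCast_sub_one {n : ℕ} [NeZero n] : ((n - 1 : ℕ) : Fin n) = -1 := by
  rw [eq_neg_iff_add_eq_zero, ← Nat.cast_add_one, Nat.sub_add_cancel NeZero.one_le,
    Fin.natCast_self]

section SmallGainWeights

variable {n : ℕ} [NeZero n] {ℓ : Fin n → Fin n → ℝ} {k : Fin n} {lam : Fin n → ℝ}

noncomputable def edgeRatio (ℓ : Fin n → Fin n → ℝ) (i : Fin n) : ℝ := ℓ i (i + 1) / ℓ (i + 1) i

def IsSmallGainWeight (ℓ : Fin n → Fin n → ℝ) (k : Fin n) (lam : Fin n → ℝ) : Prop :=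
  ∀ m < n, lam (k + 1 + (m : Fin n)) = ∏ t ∈ Finset.range m, √(edgeRatio ℓ (k + 1 + (t : Fin n)))

theorem edgeRatio_nonneg (hℓ : ∀ i, 0 < ℓ i (i + 1) ∧ 0 < ℓ (i + 1) i) (i : Fin n) :
    0 ≤ edgeRatio ℓ i :=
  div_nonneg (hℓ i).1.le (hℓ i).2.le

namespace IsSmallGainWeight

theorem nonneg (hlam : IsSmallGainWeight ℓ k lam) (i : Fin n) : 0 ≤ lam i := by
  obtain ⟨m, hm, rfl⟩ := Fin.exists_lt_add_natCast_eq_s1 (k + 1) i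
  rw [hlam m hm]
  exact Finset.prod_nonneg fun t _ => Real.sqrt_nonneg _

theorem apply_succ (hlam : IsSmallGainWeight ℓ k lam) {m : ℕ} (hm : m + 1 < n) :
    lam (k + 1 + (m : Fin n) + 1) =
      lam (k + 1 + (m : Fin n)) * √(edgeRatio ℓ (k + 1 + (m : Fin n))) := by
  rw [add_assoc (k + 1), ← Nat.cast_succ, hlam (m + 1) hm, Finset.prod_range_succ,
    hlam m (by omega)]

theorem apply_self (hlam : IsSmallGainWeight ℓ k lam)
    (hℓ : ∀ i, 0 < ℓ i (i + 1) ∧ 0 < ℓ (i + 1) i) :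
    lam k = √(∏ t ∈ Finset.range (n - 1), edgeRatio ℓ (k + 1 + (t : Fin n))) := by
  rw [Real.sqrt_prod _ fun t _ => edgeRatio_nonneg hℓ _,
    ← hlam (n - 1) (Nat.sub_one_lt (NeZero.ne n)), Fin.natCast_sub_one, add_neg_cancel_right]

theorem balanced (hlam : IsSmallGainWeight ℓ k lam)
    (hℓ : ∀ i, 0 < ℓ i (i + 1) ∧ 0 < ℓ (i + 1) i) (hcycle : ∀ i, ℓ i (i + 1) * ℓ (i + 1) i ≤ 1)
    (hlo : ℓ k (k + 1) * ℓ (k + 1) k ≤ ∏ i, edgeRatio ℓ i)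
    (hhi : ∏ i, edgeRatio ℓ i ≤ 1 / (ℓ k (k + 1) * ℓ (k + 1) k)) (i : Fin n) :
    lam i * ℓ i (i + 1) ≤ lam (i + 1) ∧ lam (i + 1) * ℓ (i + 1) i ≤ lam i := by
  obtain ⟨m, hm, rfl⟩ := Fin.exists_lt_add_natCast_eq_s1 (k + 1) i
  rcases Nat.lt_or_ge (m + 1) n with hm1 | hm1
  · rw [hlam.apply_succ hm1]
    exact mul_le_mul_sqrt_div_and_mul_sqrt_div_mul_le_of_mul_le_one (hℓ _).1 (hℓ _).2 (hcycle _)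
      (hlam.nonneg _)
  · obtain rfl : m = n - 1 := by omega
    have hprod : ∏ i, edgeRatio ℓ i =
        (∏ t ∈ Finset.range (n - 1), edgeRatio ℓ (k + 1 + (t : Fin n))) * edgeRatio ℓ k := by
      calc ∏ i, edgeRatio ℓ i
          = ∏ t ∈ Finset.range (n - 1 + 1), edgeRatio ℓ (k + 1 + (t : Fin n)) := by
            rw [Nat.sub_add_cancel NeZero.one_le, Fin.prod_univ_eq_prod_range_add _ (k + 1)]
        _ = _ := by
            rw [Finset.prod_range_succ, Fin.natCast_sub_one, add_neg_cancel_right]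
    have hone : lam (k + 1) = 1 := by simpa using hlam 0 (NeZero.pos n)
    rw [Fin.natCast_sub_one, add_neg_cancel_right, hone, one_mul, hlam.apply_self hℓ]
    rw [hprod] at hlo hhi
    exact sqrt_mul_le_one_and_le_sqrt_of_le_mul_div (hℓ k).1 (hℓ k).2 hlo hhi

end IsSmallGainWeight

end SmallGainWeights

theorem balancing_network_lyapunov_decrease_general
    (n : ℕ) [NeZero n]
    (η σ : Fin n → Fin n → (Fin n → ℝ) → ℝ)
    (hησ_nonneg : ∀ i j : Fin n, (j = i - 1 ∨ j = i + 1) →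
      ∀ x : Fin n → ℝ, (∀ l, 0 ≤ x l) → 0 ≤ η i j x ∧ 0 ≤ σ i j x)
    (θ : Fin n → ℝ → ℝ)
    (κ : Fin n → ℝ → ℝ)
    (ℓ : Fin n → Fin n → ℝ)
    (hℓ_pos : ∀ i j : Fin n, (j = i - 1 ∨ j = i + 1) → 0 < ℓ i j)
    (hbound : ∀ i j : Fin n, (j = i - 1 ∨ j = i + 1) →
      ∀ x : Fin n → ℝ, (∀ l, 0 ≤ x l) → σ i j x ≤ ℓ i j * η i j x)
    (hsg_cycle1 : ∀ i : Fin n, ℓ i (i + 1) * ℓ (i + 1) i ≤ 1)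
    (k : Fin n)
    (hsg_cyclen_lo : ℓ k (k + 1) * ℓ (k + 1) k ≤ ∏ i : Fin n, ℓ i (i + 1) / ℓ (i + 1) i)
    (hsg_cyclen_hi : ∏ i : Fin n, ℓ i (i + 1) / ℓ (i + 1) i ≤
      1 / (ℓ k (k + 1) * ℓ (k + 1) k))
    (lam : Fin n → ℝ)
    (hlam : ∀ m : ℕ, m < n →
      lam (k + 1 + (m : Fin n)) =
        ∏ t ∈ Finset.range m,
          Real.sqrt (ℓ (k + 1 + (t : Fin n)) (k + 1 + (t : Fin n) + 1) /
            ℓ (k + 1 + (t : Fin n) + 1) (k + 1 + (t : Fin n))))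
    (w : ℝ → Fin n → ℝ)
    (x : ℝ → Fin n → ℝ)
    (hx_nonneg : ∀ t ≥ (0:ℝ), ∀ i, 0 ≤ x t i)
    (hx_sol : ∀ t ≥ (0:ℝ), ∀ i : Fin n,
      HasDerivAt (fun s => x s i)
        (-η (i - 1) i (x t) + σ i (i - 1) (x t) - η (i + 1) i (x t) +
          σ i (i + 1) (x t) - θ i (x t i) + κ i (w t i)) t) :
    ∀ t ≥ (0:ℝ),
      deriv (fun s => ∑ i : Fin n, lam i * x s i) t ≤
        ∑ i : Fin n, lam i * (-θ i (x t i) + κ i (w t i)) := by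
  intro t ht
  have hxt := hx_nonneg t ht
  have hadj : ∀ i : Fin n, (i + 1 = i - 1 ∨ i + 1 = i + 1) ∧ (i = i + 1 - 1 ∨ i = i + 1 + 1) :=
    fun i => ⟨Or.inr rfl, Or.inl (add_sub_cancel_right i 1).symm⟩
  have hℓ i := And.intro (hℓ_pos i _ (hadj i).1) (hℓ_pos _ i (hadj i).2)
  have hweights : IsSmallGainWeight ℓ k lam := hlam
  have hexchange := sum_exchange_nonpos (lam := lam) (E := fun i j => η i j (x t))
    (S := fun i j => σ i j (x t)) hweights.nonneg
    (fun i => ⟨(hησ_nonneg i _ (hadj i).1 _ hxt).1, (hησ_nonneg _ i (hadj i).2 _ hxt).1⟩)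
    (fun i => ⟨hbound i _ (hadj i).1 _ hxt, hbound _ i (hadj i).2 _ hxt⟩)
    (hweights.balanced hℓ hsg_cycle1 hsg_cyclen_lo hsg_cyclen_hi)
  rw [(HasDerivAt.fun_sum fun i _ => (hx_sol t ht i).const_mul (lam i)).deriv]
  calc _ = ∑ i, lam i * (-η (i - 1) i (x t) + σ i (i - 1) (x t) - η (i + 1) i (x t) +
          σ i (i + 1) (x t)) + ∑ i, lam i * (-θ i (x t i) + κ i (w t i)) := by
        rw [← Finset.sum_add_distrib]
        exact Finset.sum_congr rfl fun i _ => by ring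
    _ ≤ _ := by linarith

/-- Along any nonnegative solution of the circular balancing network
ẋᵢ = -η_{i-1,i}(x) + σ_{i,i-1}(x) - η_{i+1,i}(x) + σ_{i,i+1}(x) - θᵢ(xᵢ) + κᵢ(wᵢ),
under the cyclic small-gain conditions, the weighted sum V(x) = Σ λᵢ xᵢ with the
small-gain weights λ satisfies dV/dt ≤ Σ λᵢ (-θᵢ(xᵢ) + κᵢ(wᵢ)). -/
theorem balancing_network_lyapunov_decrease
    (n : ℕ) [NeZero n] (hn : 2 ≤ n)
    (η σ : Fin n → Fin n → (Fin n → ℝ) → ℝ)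
    (hη_lip : ∀ i j : Fin n, LocallyLipschitz (η i j))
    (hσ_lip : ∀ i j : Fin n, LocallyLipschitz (σ i j))
    (hησ_nonneg : ∀ i j : Fin n, (j = i - 1 ∨ j = i + 1) →
      ∀ x : Fin n → ℝ, (∀ l, 0 ≤ x l) → 0 ≤ η i j x ∧ 0 ≤ σ i j x)
    (hη_zero : ∀ i : Fin n, ∀ x : Fin n → ℝ, (∀ l, 0 ≤ x l) → x i = 0 →
      η (i - 1) i x = 0 ∧ η (i + 1) i x = 0)
    (θ : Fin n → ℝ → ℝ)
    (hθ : ∀ i, IsClassP (θ i) ∧ LocallyLipschitz (θ i))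
    (κ : Fin n → ℝ → ℝ)
    (hκ : ∀ i, IsClassK (κ i) ∨ κ i = 0)
    (ℓ : Fin n → Fin n → ℝ)
    (hℓ_pos : ∀ i j : Fin n, (j = i - 1 ∨ j = i + 1) → 0 < ℓ i j)
    (hbound : ∀ i j : Fin n, (j = i - 1 ∨ j = i + 1) →
      ∀ x : Fin n → ℝ, (∀ l, 0 ≤ x l) → σ i j x ≤ ℓ i j * η i j x)
    (hsg_cycle1 : ∀ i : Fin n, ℓ i (i + 1) * ℓ (i + 1) i ≤ 1)
    (k : Fin n)
    (hsg_cyclen_lo : ℓ k (k + 1) * ℓ (k + 1) k ≤ ∏ i : Fin n, ℓ i (i + 1) / ℓ (i + 1) i)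
    (hsg_cyclen_hi : ∏ i : Fin n, ℓ i (i + 1) / ℓ (i + 1) i ≤
      1 / (ℓ k (k + 1) * ℓ (k + 1) k))
    (lam : Fin n → ℝ)
    (hlam : ∀ m : ℕ, m < n →
      lam (k + 1 + (m : Fin n)) =
        ∏ t ∈ Finset.range m,
          Real.sqrt (ℓ (k + 1 + (t : Fin n)) (k + 1 + (t : Fin n) + 1) /
            ℓ (k + 1 + (t : Fin n) + 1) (k + 1 + (t : Fin n))))
    (w : ℝ → Fin n → ℝ) (hw_meas : Measurable w)
    (hw_nonneg : ∀ t ≥ (0:ℝ), ∀ i, 0 ≤ w t i)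
    (hw_locbdd : ∀ T : ℝ, ∃ C : ℝ, ∀ t ∈ Set.Icc (0:ℝ) T, ∀ i, |w t i| ≤ C)
    (x : ℝ → Fin n → ℝ)
    (hx_nonneg : ∀ t ≥ (0:ℝ), ∀ i, 0 ≤ x t i)
    (hx_sol : ∀ t ≥ (0:ℝ), ∀ i : Fin n,
      HasDerivAt (fun s => x s i)
        (-η (i - 1) i (x t) + σ i (i - 1) (x t) - η (i + 1) i (x t) +
          σ i (i + 1) (x t) - θ i (x t i) + κ i (w t i)) t) :
    ∀ t ≥ (0:ℝ),
      deriv (fun s => ∑ i : Fin n, lam i * x s i) t ≤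
        ∑ i : Fin n, lam i * (-θ i (x t i) + κ i (w t i)) :=
  balancing_network_lyapunov_decrease_general n η σ hησ_nonneg θ κ ℓ hℓ_pos hbound hsg_cycle1 k
    hsg_cyclen_lo hsg_cyclen_hi lam hlam w x hx_nonneg hx_sol
end

section
/- Under the hypotheses of the balancing network ẋ_i = −η_{i−1,i}(x) + σ_{i,i−1}(x) − η_{i+1,i}(x) + σ_{i,i+1}(x) − θ_i(x_i) + κ_i(w_i) (circular indices, locally Lipschitz nonnegative rates with η_{i−1,i}(x) = η_{i+1,i}(x) = 0 when x_i = 0, θ_i of class P, κ_i of class K or zero, σ_{i,j}(x) ≤ ℓ_{i,j} η_{i,j}(x) with ℓ_{i,j} > 0, ℓ_{i,i+1} ℓ_{i+1,i} ≤ 1 for all i, and ℓ_{k,k+1} ℓ_{k+1,k} ≤ ∏_{i=1}^{n}(ℓ_{i,i+1}/ℓ_{i+1,i}) ≤ 1/(ℓ_{k,k+1} ℓ_{k+1,k}) for some k), let λ_i = ∏_{j=k+2}^{i} √(ℓ_{j−1,j}/ℓ_{j,j−1}) and V(x) = Σ_i λ_i x_i, and let f_i(x,w) denote the right-hand side of the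 i-th equation. Then there exist α of class P and σ of class K such that Σ_i λ_i f_i(x,w) ≤ −α(V(x)) + σ(|w|) for all x ∈ [0,∞)^n and w ∈ [0,∞)^n; moreover α can be taken of class K if every θ_i is of class K, and of class K∞ if every θ_i is of class K∞. -/
/-- A function of class K∞: class K and unbounded. -/
def IsClassKInfty (f : ℝ → ℝ) : Prop :=
  IsClassK f ∧ Filter.Tendsto f Filter.atTop Filter.atTop

/-- The right-hand side of the i-th equation of the circular balancing network. -/
def netRHS (n : ℕ) [NeZero n] (η σ : Fin n → Fin n → (Fin n → ℝ) → ℝ)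
    (θ κ : Fin n → ℝ → ℝ) (x w : Fin n → ℝ) (i : Fin n) : ℝ :=
  -η (i - 1) i x + σ i (i - 1) x - η (i + 1) i x + σ i (i + 1) x
    - θ i (x i) + κ i (w i)

open Fin.NatCast

open Finset Filter Set

section ComparisonFunctions

variable {f : ℝ → ℝ}

lemma IsClassP.nonneg (hf : IsClassP f) {s : ℝ} (hs : 0 ≤ s) : 0 ≤ f s := by
  rcases hs.eq_or_lt with rfl | hs
  · exact hf.2.1.ge
  · exact (hf.2.2 s hs).le

lemma IsClassK.isClassP (hf : IsClassK f) : IsClassP f :=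
  ⟨hf.1, hf.2.2, fun _ hs => hf.2.2 ▸ hf.2.1 self_mem_Ici hs.le hs⟩

lemma continuousOn_monotoneOn_of_isClassK_or_eq_zero (hf : IsClassK f ∨ f = 0) :
    ContinuousOn f (Ici 0) ∧ MonotoneOn f (Ici 0) ∧ f 0 = 0 := by
  rcases hf with hf | rfl
  · exact ⟨hf.1, hf.2.1.monotoneOn, hf.2.2⟩
  · exact ⟨continuousOn_const, monotoneOn_const, rfl⟩

lemma IsClassP.rescale (hf : IsClassP f) {a : ℝ} (ha : 0 < a) :
    IsClassP fun y => a * f (y / a) :=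
  ⟨continuousOn_const.mul (hf.1.comp (continuousOn_id.div_const a)
      fun _ hy => div_nonneg hy ha.le),
    by simp [hf.2.1], fun y hy => mul_pos ha (hf.2.2 _ (div_pos hy ha))⟩

lemma IsClassK.rescale (hf : IsClassK f) {a : ℝ} (ha : 0 < a) :
    IsClassK fun y => a * f (y / a) :=
  ⟨(hf.isClassP.rescale ha).1,
    fun _ hy _ hz hyz => mul_lt_mul_of_pos_left (hf.2.1 (div_nonneg hy ha.le)
      (div_nonneg hz ha.le) (div_lt_div_of_pos_right hyz ha)) ha,
    (hf.isClassP.rescale ha).2.1⟩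

lemma IsClassKInfty.rescale (hf : IsClassKInfty f) {a : ℝ} (ha : 0 < a) :
    IsClassKInfty fun y => a * f (y / a) :=
  ⟨hf.1.rescale ha, (hf.2.comp (tendsto_id.atTop_div_const ha)).const_mul_atTop ha⟩

variable {ι : Type*} [Fintype ι] [Nonempty ι] {F : ι → ℝ → ℝ}

lemma IsClassP.finset_inf' (hF : ∀ i, IsClassP (F i)) :
    IsClassP fun y => univ.inf' univ_nonempty fun i => F i y :=
  ⟨ContinuousOn.finset_inf'_apply univ_nonempty fun i _ => (hF i).1,
    by simp [fun i => (hF i).2.1],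
    fun y hy => (lt_inf'_iff _).2 fun i _ => (hF i).2.2 y hy⟩

lemma IsClassK.finset_inf' (hF : ∀ i, IsClassK (F i)) :
    IsClassK fun y => univ.inf' univ_nonempty fun i => F i y := by
  refine ⟨(IsClassP.finset_inf' fun i => (hF i).isClassP).1, fun y hy z hz hyz => ?_,
    (IsClassP.finset_inf' fun i => (hF i).isClassP).2.1⟩
  obtain ⟨i, -, hi⟩ := exists_mem_eq_inf' univ_nonempty fun i => F i z
  calc univ.inf' univ_nonempty (fun i => F i y) ≤ F i y := inf'_le _ (mem_univ i)
    _ < F i z := (hF i).2.1 hy hz hyz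
    _ = _ := hi.symm

lemma IsClassKInfty.finset_inf' (hF : ∀ i, IsClassKInfty (F i)) :
    IsClassKInfty fun y => univ.inf' univ_nonempty fun i => F i y :=
  ⟨IsClassK.finset_inf' fun i => (hF i).1, tendsto_atTop.2 fun b =>
    (eventually_all.2 fun i => (hF i).2.eventually_ge_atTop b).mono
      fun _ hy => le_inf' _ _ fun i _ => hy i⟩

end ComparisonFunctions

/-- The minimum of `φ` over `[c * s, s]`, parametrised over the fixed compact `[c, 1]` so that
continuity in `s` follows from compactness. -/
noncomputable def scaledInf (φ : ℝ → ℝ) (c s : ℝ) : ℝ := ⨅ t : Icc c 1, φ (t * s)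

section ScaledInf

variable {φ : ℝ → ℝ} {c : ℝ}

lemma scaledInf_continuousOn (hφ : ContinuousOn φ (Ici 0)) (hc : 0 < c) :
    ContinuousOn (scaledInf φ c) (Ici 0) := by
  rw [continuousOn_iff_continuous_domRestrict]
  have hcont : Continuous fun p : Ici (0 : ℝ) × Icc c 1 => φ (p.2 * p.1) :=
    hφ.comp_continuous (by fun_prop) fun p => mul_nonneg (hc.le.trans p.2.2.1) p.1.2
  show Continuous fun s : Ici (0 : ℝ) => sInf (range fun t : Icc c 1 => φ (t * s))
  simpa only [image_univ] using isCompact_univ.continuous_sInf hcont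

lemma exists_scaledInf_eq (hφ : ContinuousOn φ (Ici 0)) (hc : 0 < c) (hc1 : c ≤ 1)
    {s : ℝ} (hs : 0 ≤ s) :
    ∃ t ∈ Icc c 1, scaledInf φ c s = φ (t * s) ∧ ∀ t' ∈ Icc c 1, φ (t * s) ≤ φ (t' * s) := by
  have hcont : Continuous fun t : Icc c 1 => φ (t * s) :=
    hφ.comp_continuous (by fun_prop) fun t => mul_nonneg (hc.le.trans t.2.1) hs
  obtain ⟨t, -, ht⟩ := isCompact_univ.exists_isMinOn ⟨⟨c, left_mem_Icc.2 hc1⟩, mem_univ _⟩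
    hcont.continuousOn
  replace ht : ∀ t' : Icc c 1, φ (t * s) ≤ φ (t' * s) := fun t' => ht (mem_univ t')
  have : Nonempty (Icc c 1) := ⟨t⟩
  refine ⟨t, t.2, le_antisymm (ciInf_le ⟨_, forall_mem_range.2 ht⟩ t) (le_ciInf ht),
    fun t' ht' => ht ⟨t', ht'⟩⟩

lemma scaledInf_le (hφ : ContinuousOn φ (Ici 0)) (hc : 0 < c) (hc1 : c ≤ 1)
    {s r : ℝ} (hs : 0 ≤ s) (hr : r ∈ Icc (c * s) s) : scaledInf φ c s ≤ φ r := by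
  obtain ⟨t, -, heq, hmin⟩ := exists_scaledInf_eq hφ hc hc1 hs
  rw [heq]
  rcases hs.eq_or_lt with rfl | hs
  · obtain rfl : r = 0 := le_antisymm hr.2 (by simpa using hr.1)
    simp
  · have ht' : r / s ∈ Icc c 1 :=
      ⟨(le_div_iff₀ hs).2 hr.1, (div_le_one hs).2 hr.2⟩
    simpa [div_mul_cancel₀ r hs.ne'] using hmin _ ht'

lemma isClassP_scaledInf (hφ : IsClassP φ) (hc : 0 < c) (hc1 : c ≤ 1) :
    IsClassP (scaledInf φ c) := by
  refine ⟨scaledInf_continuousOn hφ.1 hc, ?_, fun s hs => ?_⟩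
  · obtain ⟨t, -, heq, -⟩ := exists_scaledInf_eq hφ.1 hc hc1 le_rfl
    simpa [hφ.2.1] using heq
  · obtain ⟨t, ht, heq, -⟩ := exists_scaledInf_eq hφ.1 hc hc1 hs.le
    exact heq ▸ hφ.2.2 _ (mul_pos (hc.trans_le ht.1) hs)

lemma isClassK_scaledInf (hφ : IsClassK φ) (hc : 0 < c) (hc1 : c ≤ 1) :
    IsClassK (scaledInf φ c) := by
  refine ⟨scaledInf_continuousOn hφ.1 hc, fun s hs s' hs' hss' => ?_,
    (isClassP_scaledInf hφ.isClassP hc hc1).2.1⟩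
  obtain ⟨t, -, heq, hmin⟩ := exists_scaledInf_eq hφ.1 hc hc1 hs
  obtain ⟨t', ht', heq', -⟩ := exists_scaledInf_eq hφ.1 hc hc1 hs'
  have ht'0 : 0 < t' := hc.trans_le ht'.1
  calc scaledInf φ c s ≤ φ (t' * s) := heq ▸ hmin t' ht'
    _ < φ (t' * s') := hφ.2.1 (mul_nonneg ht'0.le hs) (mul_nonneg ht'0.le hs')
        (mul_lt_mul_of_pos_left hss' ht'0)
    _ = scaledInf φ c s' := heq'.symm

lemma isClassKInfty_scaledInf (hφ : IsClassKInfty φ) (hc : 0 < c) (hc1 : c ≤ 1) :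
    IsClassKInfty (scaledInf φ c) := by
  refine ⟨isClassK_scaledInf hφ.1 hc hc1, tendsto_atTop_mono' _ ?_
    (hφ.2.comp (tendsto_id.const_mul_atTop hc))⟩
  filter_upwards [eventually_ge_atTop 0] with s hs
  obtain ⟨t, ht, heq, -⟩ := exists_scaledInf_eq hφ.1.1 hc hc1 hs
  rw [heq]
  exact hφ.1.2.1.monotoneOn (mul_nonneg hc.le hs) (mul_nonneg (hc.le.trans ht.1) hs)
    (mul_le_mul_of_nonneg_right ht.1 hs)

end ScaledInf

section DecayRate

variable {ι : Type*} [Fintype ι] [Nonempty ι] (lam : ι → ℝ) (θ : ι → ℝ → ℝ)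

noncomputable def decayRate : ℝ → ℝ :=
  scaledInf (fun y => univ.inf' univ_nonempty fun i => lam i * θ i (y / lam i))
    (Fintype.card ι : ℝ)⁻¹

lemma inv_card_pos : 0 < (Fintype.card ι : ℝ)⁻¹ := by
  simp [Fintype.card_pos]

lemma inv_card_le_one : (Fintype.card ι : ℝ)⁻¹ ≤ 1 :=
  inv_le_one_of_one_le₀ (by exact_mod_cast Fintype.card_pos)

lemma exists_inv_card_mul_sum_le (a : ι → ℝ) :
    ∃ j, (Fintype.card ι : ℝ)⁻¹ * ∑ i, a i ≤ a j := by
  obtain ⟨j, -, hj⟩ := exists_le_of_sum_le (univ_nonempty (α := ι))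
    (f := fun _ => (Fintype.card ι : ℝ)⁻¹ * ∑ i, a i) (g := a) (by
      rw [sum_const, card_univ, nsmul_eq_mul, ← mul_assoc,
        mul_inv_cancel₀ (Nat.cast_ne_zero.2 Fintype.card_ne_zero : (Fintype.card ι : ℝ) ≠ 0),
        one_mul])
  exact ⟨j, hj⟩

variable {lam θ}

lemma isClassP_decayRate (hlam : ∀ i, 0 < lam i) (hθ : ∀ i, IsClassP (θ i)) :
    IsClassP (decayRate lam θ) :=
  isClassP_scaledInf (IsClassP.finset_inf' fun i => (hθ i).rescale (hlam i)) inv_card_pos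
    inv_card_le_one

lemma isClassK_decayRate (hlam : ∀ i, 0 < lam i) (hθ : ∀ i, IsClassK (θ i)) :
    IsClassK (decayRate lam θ) :=
  isClassK_scaledInf (IsClassK.finset_inf' fun i => (hθ i).rescale (hlam i)) inv_card_pos
    inv_card_le_one

lemma isClassKInfty_decayRate (hlam : ∀ i, 0 < lam i) (hθ : ∀ i, IsClassKInfty (θ i)) :
    IsClassKInfty (decayRate lam θ) :=
  isClassKInfty_scaledInf (IsClassKInfty.finset_inf' fun i => (hθ i).rescale (hlam i))
    inv_card_pos inv_card_le_one

lemma decayRate_le_sum (hlam : ∀ i, 0 < lam i) (hθ : ∀ i, IsClassP (θ i)) {x : ι → ℝ}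
    (hx : ∀ i, 0 ≤ x i) :
    decayRate lam θ (∑ i, lam i * x i) ≤ ∑ i, lam i * θ i (x i) := by
  have hterm : ∀ i, 0 ≤ lam i * x i := fun i => mul_nonneg (hlam i).le (hx i)
  obtain ⟨j, hj⟩ := exists_inv_card_mul_sum_le fun i => lam i * x i
  calc decayRate lam θ (∑ i, lam i * x i)
      ≤ univ.inf' univ_nonempty fun i => lam i * θ i (lam j * x j / lam i) :=
        scaledInf_le (IsClassP.finset_inf' fun i => (hθ i).rescale (hlam i)).1 inv_card_pos
          inv_card_le_one (sum_nonneg fun i _ => hterm i)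
          ⟨hj, single_le_sum (fun i _ => hterm i) (mem_univ j)⟩
    _ ≤ lam j * θ j (lam j * x j / lam j) := inf'_le _ (mem_univ j)
    _ = lam j * θ j (x j) := by rw [mul_div_cancel_left₀ _ (hlam j).ne']
    _ ≤ ∑ i, lam i * θ i (x i) :=
        single_le_sum (fun i _ => mul_nonneg (hlam i).le ((hθ i).nonneg (hx i))) (mem_univ j)

end DecayRate

section Gain

variable {ι : Type*} [Fintype ι] {lam : ι → ℝ} {κ : ι → ℝ → ℝ}

/-- The added `s` makes the gain strictly increasing even when every `κᵢ` vanishes. -/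
noncomputable def inputGain (lam : ι → ℝ) (κ : ι → ℝ → ℝ) (s : ℝ) : ℝ :=
  s + ∑ i, lam i * κ i s

lemma isClassK_inputGain (hlam : ∀ i, 0 ≤ lam i) (hκ : ∀ i, IsClassK (κ i) ∨ κ i = 0) :
    IsClassK (inputGain lam κ) := by
  have hκ' := fun i => continuousOn_monotoneOn_of_isClassK_or_eq_zero (hκ i)
  refine ⟨continuousOn_id.add (continuousOn_finsetSum _ fun i _ =>
      continuousOn_const.mul (hκ' i).1), fun s hs s' hs' hss' => ?_,
    by simp [inputGain, fun i => (hκ' i).2.2]⟩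
  exact add_lt_add_of_lt_of_le hss' (sum_le_sum fun i _ =>
    mul_le_mul_of_nonneg_left ((hκ' i).2.1 hs hs' hss'.le) (hlam i))

lemma sum_mul_le_inputGain (hlam : ∀ i, 0 ≤ lam i) (hκ : ∀ i, IsClassK (κ i) ∨ κ i = 0)
    {w : ι → ℝ} (hw : ∀ i, 0 ≤ w i) :
    ∑ i, lam i * κ i (w i) ≤ inputGain lam κ √(∑ i, w i ^ 2) := by
  have hwle : ∀ i, w i ≤ √(∑ j, w j ^ 2) := fun i => (le_abs_self _).trans
    (Real.abs_le_sqrt (single_le_sum (fun j _ => sq_nonneg (w j)) (mem_univ i)))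
  refine le_add_of_nonneg_of_le (Real.sqrt_nonneg _) (sum_le_sum fun i _ => ?_)
  exact mul_le_mul_of_nonneg_left ((continuousOn_monotoneOn_of_isClassK_or_eq_zero (hκ i)).2.1
    (hw i) (Real.sqrt_nonneg _) (hwle i)) (hlam i)

end Gain

lemma mul_le_and_mul_le_of_sq_mul_eq {a b L R Q : ℝ} (ha : 0 < a) (hb : 0 < b) (hL : 0 ≤ L)
    (hR : 0 ≤ R) (h : L ^ 2 * a = Q * b * R ^ 2) (hlo : a * b ≤ Q) (hhi : Q ≤ 1 / (a * b)) :
    L * a ≤ R ∧ R * b ≤ L := by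
  have hhi' : Q * (a * b) ≤ 1 := (le_div_iff₀ (mul_pos ha hb)).1 hhi
  constructor
  · refine (pow_le_pow_iff_left₀ (by positivity) hR two_ne_zero).1 ?_
    calc (L * a) ^ 2 = Q * (a * b) * R ^ 2 := by linear_combination a * h
      _ ≤ R ^ 2 := mul_le_of_le_one_left (sq_nonneg R) hhi'
  · refine (pow_le_pow_iff_left₀ (by positivity) hL two_ne_zero).1 ?_
    refine le_of_mul_le_mul_left ?_ ha
    calc a * (R * b) ^ 2 = a * b * b * R ^ 2 := by ring
      _ ≤ Q * b * R ^ 2 := by gcongr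
      _ = a * L ^ 2 := by linear_combination -h

section Cycle

variable {n : ℕ} [NeZero n]

lemma exists_eq_add_natCast (a j : Fin n) : ∃ m < n, j = a + (m : Fin n) :=
  ⟨(j - a).val, (j - a).isLt, by simp⟩

lemma add_one_add_natCast_pred (k : Fin n) : k + 1 + ((n - 1 : ℕ) : Fin n) = k := by
  rw [add_assoc, add_comm 1, ← Nat.cast_add_one, Nat.sub_one_add_one (NeZero.ne n),
    Fin.natCast_self, add_zero]

lemma cyclic_prod_range_step {g μ : Fin n → ℝ} {k : Fin n}
    (hμ : ∀ m < n, μ (k + 1 + (m : Fin n)) = ∏ t ∈ range m, g (k + 1 + (t : Fin n))) :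
    μ (k + 1) = 1 ∧ (∀ j ≠ k, μ (j + 1) = μ j * g j) ∧ μ k * g k = ∏ i, g i := by
  have hk := add_one_add_natCast_pred k
  refine ⟨by simpa using hμ 0 (NeZero.pos n), fun j hj => ?_, ?_⟩
  · obtain ⟨m, hm, rfl⟩ := exists_eq_add_natCast (k + 1) j
    have hm1 : m + 1 < n := by
      refine lt_of_le_of_ne hm fun h => hj ?_
      obtain rfl : m = n - 1 := by omega
      exact hk
    rw [show k + 1 + (m : Fin n) + 1 = k + 1 + ((m + 1 : ℕ) : Fin n) by
      rw [Nat.cast_succ, add_assoc], hμ _ hm1, hμ _ hm, prod_range_succ]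
  · rw [← hk, hμ _ (Nat.sub_lt (NeZero.pos n) one_pos), ← prod_range_succ
      (fun t => g (k + 1 + (t : Fin n))), Nat.sub_add_cancel NeZero.one_le,
      ← Fin.prod_univ_eq_prod_range]
    simp only [Fin.cast_val_eq_self]
    exact Equiv.prod_comp (Equiv.addLeft (k + 1)) g

lemma sum_mul_neighbour_flows_nonpos {lam : Fin n → ℝ} {E S ℓ : Fin n → Fin n → ℝ}
    (hlam : ∀ j, 0 ≤ lam j) (hE : ∀ j, 0 ≤ E j (j + 1) ∧ 0 ≤ E (j + 1) j)
    (hS : ∀ j, S j (j + 1) ≤ ℓ j (j + 1) * E j (j + 1) ∧ S (j + 1) j ≤ ℓ (j + 1) j * E (j + 1) j)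
    (hedge : ∀ j, lam j * ℓ j (j + 1) ≤ lam (j + 1) ∧ lam (j + 1) * ℓ (j + 1) j ≤ lam j) :
    ∑ i, lam i * (-E (i - 1) i + S i (i - 1) - E (i + 1) i + S i (i + 1)) ≤ 0 := by
  have flow : ∀ {L R l s e : ℝ}, 0 ≤ L → 0 ≤ e → s ≤ l * e → L * l ≤ R → L * s - R * e ≤ 0 :=
    fun hL he hs hlR => sub_nonpos.2 <| calc
      _ ≤ _ := mul_le_mul_of_nonneg_left hs hL
      _ = _ := (mul_assoc _ _ _).symm
      _ ≤ _ := mul_le_mul_of_nonneg_right hlR he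
  calc ∑ i, lam i * (-E (i - 1) i + S i (i - 1) - E (i + 1) i + S i (i + 1))
      = ∑ i, lam i * (-E (i - 1) i + S i (i - 1)) + ∑ i, lam i * (-E (i + 1) i + S i (i + 1)) := by
        rw [← sum_add_distrib]; exact sum_congr rfl fun i _ => by ring
    _ = ∑ j, lam (j + 1) * (-E j (j + 1) + S (j + 1) j)
          + ∑ j, lam j * (-E (j + 1) j + S j (j + 1)) := by
        rw [← Equiv.sum_comp (Equiv.addRight (1 : Fin n))
          fun i => lam i * (-E (i - 1) i + S i (i - 1))]
        simp only [Equiv.coe_addRight, add_sub_cancel_right]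
    _ = ∑ j, ((lam j * S j (j + 1) - lam (j + 1) * E j (j + 1))
          + (lam (j + 1) * S (j + 1) j - lam j * E (j + 1) j)) := by
        rw [← sum_add_distrib]; exact sum_congr rfl fun j _ => by ring
    _ ≤ 0 := sum_nonpos fun j _ => add_nonpos
        (flow (hlam j) (hE j).1 (hS j).1 (hedge j).1)
        (flow (hlam (j + 1)) (hE j).2 (hS j).2 (hedge j).2)

lemma pos_and_mul_le_of_cyclic_small_gain {ℓ : Fin n → Fin n → ℝ} {lam : Fin n → ℝ} {k : Fin n}
    (hℓ : ∀ j, 0 < ℓ j (j + 1) ∧ 0 < ℓ (j + 1) j)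
    (hsg : ∀ j, ℓ j (j + 1) * ℓ (j + 1) j ≤ 1)
    (hlo : ℓ k (k + 1) * ℓ (k + 1) k ≤ ∏ i, ℓ i (i + 1) / ℓ (i + 1) i)
    (hhi : ∏ i, ℓ i (i + 1) / ℓ (i + 1) i ≤ 1 / (ℓ k (k + 1) * ℓ (k + 1) k))
    (hlam : ∀ m < n, lam (k + 1 + (m : Fin n)) = ∏ t ∈ range m,
      √(ℓ (k + 1 + (t : Fin n)) (k + 1 + (t : Fin n) + 1) /
        ℓ (k + 1 + (t : Fin n) + 1) (k + 1 + (t : Fin n)))) (j : Fin n) :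
    0 < lam j ∧ lam j * ℓ j (j + 1) ≤ lam (j + 1) ∧ lam (j + 1) * ℓ (j + 1) j ≤ lam j := by
  set r : Fin n → ℝ := fun j => ℓ j (j + 1) / ℓ (j + 1) j
  have hr : ∀ j, 0 < r j := fun j => div_pos (hℓ j).1 (hℓ j).2
  have hrj : ∀ j, r j * ℓ (j + 1) j = ℓ j (j + 1) := fun j => div_mul_cancel₀ _ (hℓ j).2.ne'
  have hpos : ∀ j, 0 < lam j := fun j => by
    obtain ⟨m, hm, rfl⟩ := exists_eq_add_natCast (k + 1) j
    rw [hlam m hm]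
    exact prod_pos fun t _ => Real.sqrt_pos.2 (hr _)
  obtain ⟨hone, hstep, hwrap⟩ := cyclic_prod_range_step (g := fun j => √(r j)) hlam
  refine ⟨hpos j, ?_⟩
  rcases eq_or_ne j k with rfl | hj
  · have hprod : lam j ^ 2 * r j = ∏ i, r i := by
      have := congrArg (· ^ 2) hwrap
      rwa [← Real.sqrt_prod _ fun i _ => (hr i).le, mul_pow, Real.sq_sqrt (hr j).le,
        Real.sq_sqrt (prod_nonneg fun i _ => (hr i).le)] at this
    have hsq : lam j ^ 2 * ℓ j (j + 1) = (∏ i, r i) * ℓ (j + 1) j * lam (j + 1) ^ 2 := by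
      rw [hone, ← hprod]
      linear_combination -(lam j ^ 2) * hrj j
    exact mul_le_and_mul_le_of_sq_mul_eq (hℓ j).1 (hℓ j).2 (hpos j).le (hpos _).le hsq hlo hhi
  · have hsq : lam j ^ 2 * ℓ j (j + 1) = 1 * ℓ (j + 1) j * lam (j + 1) ^ 2 := by
      rw [hstep j hj, mul_pow, Real.sq_sqrt (hr j).le]
      linear_combination -(lam j ^ 2) * hrj j
    exact mul_le_and_mul_le_of_sq_mul_eq (hℓ j).1 (hℓ j).2 (hpos j).le (hpos _).le hsq (hsg j)
      ((one_le_div (mul_pos (hℓ j).1 (hℓ j).2)).2 (hsg j))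

end Cycle

lemma sum_mul_netRHS_le {n : ℕ} [NeZero n] {η σ : Fin n → Fin n → (Fin n → ℝ) → ℝ}
    {θ κ : Fin n → ℝ → ℝ} {ℓ : Fin n → Fin n → ℝ} {lam x w : Fin n → ℝ}
    (hη : ∀ i j : Fin n, (j = i - 1 ∨ j = i + 1) → 0 ≤ η i j x)
    (hσ : ∀ i j : Fin n, (j = i - 1 ∨ j = i + 1) → σ i j x ≤ ℓ i j * η i j x)
    (hlam : ∀ j, 0 ≤ lam j)
    (hedge : ∀ j, lam j * ℓ j (j + 1) ≤ lam (j + 1) ∧ lam (j + 1) * ℓ (j + 1) j ≤ lam j) :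
    ∑ i, lam i * netRHS n η σ θ κ x w i
      ≤ -∑ i, lam i * θ i (x i) + ∑ i, lam i * κ i (w i) := by
  have hpred : ∀ j : Fin n, j = j + 1 - 1 := fun j => (add_sub_cancel_right j 1).symm
  have hflow := sum_mul_neighbour_flows_nonpos (E := fun i j => η i j x)
    (S := fun i j => σ i j x) hlam (fun j => ⟨hη _ _ (.inr rfl), hη _ _ (.inl (hpred j))⟩)
    (fun j => ⟨hσ _ _ (.inr rfl), hσ _ _ (.inl (hpred j))⟩) hedge
  have hsplit : ∑ i, lam i * netRHS n η σ θ κ x w i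
      = ∑ i, lam i * (-η (i - 1) i x + σ i (i - 1) x - η (i + 1) i x + σ i (i + 1) x)
        + (-∑ i, lam i * θ i (x i) + ∑ i, lam i * κ i (w i)) := by
    rw [← sum_neg_distrib, ← sum_add_distrib, ← sum_add_distrib]
    exact sum_congr rfl fun i _ => by simp only [netRHS]; ring
  linarith

theorem balancing_network_iISS_lyapunov_general
    (n : ℕ) [NeZero n]
    (η σ : Fin n → Fin n → (Fin n → ℝ) → ℝ)
    (hησ_nonneg : ∀ i j : Fin n, (j = i - 1 ∨ j = i + 1) →
      ∀ x : Fin n → ℝ, (∀ l, 0 ≤ x l) → 0 ≤ η i j x ∧ 0 ≤ σ i j x)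
    (θ : Fin n → ℝ → ℝ)
    (hθ : ∀ i, IsClassP (θ i) ∧ LocallyLipschitz (θ i))
    (κ : Fin n → ℝ → ℝ)
    (hκ : ∀ i, IsClassK (κ i) ∨ κ i = 0)
    (ℓ : Fin n → Fin n → ℝ)
    (hℓ_pos : ∀ i j : Fin n, (j = i - 1 ∨ j = i + 1) → 0 < ℓ i j)
    (hbound : ∀ i j : Fin n, (j = i - 1 ∨ j = i + 1) →
      ∀ x : Fin n → ℝ, (∀ l, 0 ≤ x l) → σ i j x ≤ ℓ i j * η i j x)
    (hsg_cycle1 : ∀ i : Fin n, ℓ i (i + 1) * ℓ (i + 1) i ≤ 1)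
    (k : Fin n)
    (hsg_cyclen_lo : ℓ k (k + 1) * ℓ (k + 1) k ≤ ∏ i : Fin n, ℓ i (i + 1) / ℓ (i + 1) i)
    (hsg_cyclen_hi : ∏ i : Fin n, ℓ i (i + 1) / ℓ (i + 1) i ≤
      1 / (ℓ k (k + 1) * ℓ (k + 1) k))
    (lam : Fin n → ℝ)
    (hlam : ∀ m : ℕ, m < n →
      lam (k + 1 + (m : Fin n)) =
        ∏ t ∈ Finset.range m,
          Real.sqrt (ℓ (k + 1 + (t : Fin n)) (k + 1 + (t : Fin n) + 1) /
            ℓ (k + 1 + (t : Fin n) + 1) (k + 1 + (t : Fin n)))) :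
    (∃ α sig : ℝ → ℝ, IsClassP α ∧ IsClassK sig ∧
      ∀ x w : Fin n → ℝ, (∀ l, 0 ≤ x l) → (∀ l, 0 ≤ w l) →
        ∑ i : Fin n, lam i * netRHS n η σ θ κ x w i ≤
          -α (∑ i : Fin n, lam i * x i) + sig (Real.sqrt (∑ i : Fin n, w i ^ 2))) ∧
    ((∀ i, IsClassK (θ i)) →
      ∃ α sig : ℝ → ℝ, IsClassK α ∧ IsClassK sig ∧
        ∀ x w : Fin n → ℝ, (∀ l, 0 ≤ x l) → (∀ l, 0 ≤ w l) →
          ∑ i : Fin n, lam i * netRHS n η σ θ κ x w i ≤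
            -α (∑ i : Fin n, lam i * x i) + sig (Real.sqrt (∑ i : Fin n, w i ^ 2))) ∧
    ((∀ i, IsClassKInfty (θ i)) →
      ∃ α sig : ℝ → ℝ, IsClassKInfty α ∧ IsClassK sig ∧
        ∀ x w : Fin n → ℝ, (∀ l, 0 ≤ x l) → (∀ l, 0 ≤ w l) →
          ∑ i : Fin n, lam i * netRHS n η σ θ κ x w i ≤
            -α (∑ i : Fin n, lam i * x i) + sig (Real.sqrt (∑ i : Fin n, w i ^ 2))) := by
  have hℓ : ∀ j : Fin n, 0 < ℓ j (j + 1) ∧ 0 < ℓ (j + 1) j := fun j =>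
    ⟨hℓ_pos _ _ (.inr rfl), hℓ_pos _ _ (.inl (add_sub_cancel_right j 1).symm)⟩
  have hweights := pos_and_mul_le_of_cyclic_small_gain hℓ hsg_cycle1 hsg_cyclen_lo
    hsg_cyclen_hi hlam
  have hlam_pos : ∀ j, 0 < lam j := fun j => (hweights j).1
  have hθP : ∀ i, IsClassP (θ i) := fun i => (hθ i).1
  have hgain := isClassK_inputGain (fun j => (hlam_pos j).le) hκ
  have hdissipation : ∀ x w : Fin n → ℝ, (∀ l, 0 ≤ x l) → (∀ l, 0 ≤ w l) →
      ∑ i, lam i * netRHS n η σ θ κ x w i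
        ≤ -decayRate lam θ (∑ i, lam i * x i) + inputGain lam κ √(∑ i, w i ^ 2) :=
    fun x w hx hw => by
      have := sum_mul_netRHS_le (θ := θ) (κ := κ) (w := w)
        (fun i j hij => (hησ_nonneg i j hij x hx).1) (fun i j hij => hbound i j hij x hx)
        (fun j => (hlam_pos j).le) fun j => (hweights j).2
      linarith [decayRate_le_sum hlam_pos hθP hx,
        sum_mul_le_inputGain (fun j => (hlam_pos j).le) hκ hw]
  exact ⟨⟨_, _, isClassP_decayRate hlam_pos hθP, hgain, hdissipation⟩,
    fun hK => ⟨_, _, isClassK_decayRate hlam_pos hK, hgain, hdissipation⟩,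
    fun hK => ⟨_, _, isClassKInfty_decayRate hlam_pos hK, hgain, hdissipation⟩⟩

/-- Under the cyclic small-gain conditions, V(x) = Σ λᵢ xᵢ is an iISS
Lyapunov function for the balancing network: Σ λᵢ fᵢ(x,w) ≤ -α(V(x)) + σ(|w|) with
α of class P and σ of class K; α can be taken of class K (resp. K∞) when every θᵢ is
of class K (resp. K∞). -/
theorem balancing_network_iISS_lyapunov
    (n : ℕ) [NeZero n] (hn : 2 ≤ n)
    (η σ : Fin n → Fin n → (Fin n → ℝ) → ℝ)
    (hη_lip : ∀ i j : Fin n, LocallyLipschitz (η i j))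
    (hσ_lip : ∀ i j : Fin n, LocallyLipschitz (σ i j))
    (hησ_nonneg : ∀ i j : Fin n, (j = i - 1 ∨ j = i + 1) →
      ∀ x : Fin n → ℝ, (∀ l, 0 ≤ x l) → 0 ≤ η i j x ∧ 0 ≤ σ i j x)
    (hη_zero : ∀ i : Fin n, ∀ x : Fin n → ℝ, (∀ l, 0 ≤ x l) → x i = 0 →
      η (i - 1) i x = 0 ∧ η (i + 1) i x = 0)
    (θ : Fin n → ℝ → ℝ)
    (hθ : ∀ i, IsClassP (θ i) ∧ LocallyLipschitz (θ i))
    (κ : Fin n → ℝ → ℝ)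
    (hκ : ∀ i, IsClassK (κ i) ∨ κ i = 0)
    (ℓ : Fin n → Fin n → ℝ)
    (hℓ_pos : ∀ i j : Fin n, (j = i - 1 ∨ j = i + 1) → 0 < ℓ i j)
    (hbound : ∀ i j : Fin n, (j = i - 1 ∨ j = i + 1) →
      ∀ x : Fin n → ℝ, (∀ l, 0 ≤ x l) → σ i j x ≤ ℓ i j * η i j x)
    (hsg_cycle1 : ∀ i : Fin n, ℓ i (i + 1) * ℓ (i + 1) i ≤ 1)
    (k : Fin n)
    (hsg_cyclen_lo : ℓ k (k + 1) * ℓ (k + 1) k ≤ ∏ i : Fin n, ℓ i (i + 1) / ℓ (i + 1) i)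
    (hsg_cyclen_hi : ∏ i : Fin n, ℓ i (i + 1) / ℓ (i + 1) i ≤
      1 / (ℓ k (k + 1) * ℓ (k + 1) k))
    (lam : Fin n → ℝ)
    (hlam : ∀ m : ℕ, m < n →
      lam (k + 1 + (m : Fin n)) =
        ∏ t ∈ Finset.range m,
          Real.sqrt (ℓ (k + 1 + (t : Fin n)) (k + 1 + (t : Fin n) + 1) /
            ℓ (k + 1 + (t : Fin n) + 1) (k + 1 + (t : Fin n)))) :
    (∃ α sig : ℝ → ℝ, IsClassP α ∧ IsClassK sig ∧
      ∀ x w : Fin n → ℝ, (∀ l, 0 ≤ x l) → (∀ l, 0 ≤ w l) →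
        ∑ i : Fin n, lam i * netRHS n η σ θ κ x w i ≤
          -α (∑ i : Fin n, lam i * x i) + sig (Real.sqrt (∑ i : Fin n, w i ^ 2))) ∧
    ((∀ i, IsClassK (θ i)) →
      ∃ α sig : ℝ → ℝ, IsClassK α ∧ IsClassK sig ∧
        ∀ x w : Fin n → ℝ, (∀ l, 0 ≤ x l) → (∀ l, 0 ≤ w l) →
          ∑ i : Fin n, lam i * netRHS n η σ θ κ x w i ≤
            -α (∑ i : Fin n, lam i * x i) + sig (Real.sqrt (∑ i : Fin n, w i ^ 2))) ∧
    ((∀ i, IsClassKInfty (θ i)) →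
      ∃ α sig : ℝ → ℝ, IsClassKInfty α ∧ IsClassK sig ∧
        ∀ x w : Fin n → ℝ, (∀ l, 0 ≤ x l) → (∀ l, 0 ≤ w l) →
          ∑ i : Fin n, lam i * netRHS n η σ θ κ x w i ≤
            -α (∑ i : Fin n, lam i * x i) + sig (Real.sqrt (∑ i : Fin n, w i ^ 2))) :=
  balancing_network_iISS_lyapunov_general n η σ hησ_nonneg θ hθ κ hκ ℓ hℓ_pos hbound hsg_cycle1 k
    hsg_cyclen_lo hsg_cyclen_hi lam hlam
end

section
/- Let α and σ be class K functions, let w : [0,∞) → [0,∞) be measurable and locally essentially bounded, and let v : [0,∞) → [0,∞) be a differentiable function satisfying v'(t) ≤ −α(v(t)) + σ(w(t)) for almost all t ≥ 0. Suppose H > 0 is such that sup_{t≥0} σ(w(t)) < α(H). Then there exist T ≥ 0 and ε ∈ (0,H) such that v(t) ≤ H − ε for all t ≥ T. -/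
/-!
While `v ≥ H - ε`, the dissipation inequality gives `v' ≤ -(α (H - ε) - c) < 0` almost
everywhere, where `c < α (H - ε)` bounds `σ ∘ w` and `ε` is small by continuity of `α` at `H`.
Integrating this bound shows that `v` reaches the level `H - ε` in finite time and can never
climb back above it afterwards: from the last time `s ≤ t` with `v s ≤ H - ε`, the function
decreases up to `t`.
-/

open MeasureTheory Set Filter Topology

lemma sub_le_mul_sub_of_deriv_le_ae {f : ℝ → ℝ} {a b M : ℝ} (hab : a ≤ b)
    (hf : ∀ x ∈ Icc a b, DifferentiableAt ℝ f x)
    (hM : ∀ᵐ x ∂volume.restrict (Ioc a b), deriv f x ≤ M) :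
    f b - f a ≤ M * (b - a) := by
  -- `max (deriv f) M` is an integrable majorant of `deriv f` which is a.e. equal to `M`.
  set φ : ℝ → ℝ := fun x => max (deriv f x) M
  have hφ : φ =ᵐ[volume.restrict (Ioc a b)] fun _ => M := hM.mono fun x hx => max_eq_right hx
  have hφ_int : IntegrableOn φ (Icc a b) :=
    (integrableOn_Icc_iff_integrableOn_Ioc).mpr
      ((integrableOn_const measure_Ioc_lt_top.ne).congr_fun_ae hφ.symm)
  calc f b - f a ≤ ∫ x in a..b, φ x :=
        intervalIntegral.sub_le_integral_of_hasDeriv_right_of_le hab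
          (fun x hx => (hf x hx).continuousAt.continuousWithinAt)
          (fun x hx => (hf x (Ioo_subset_Icc_self hx)).hasDerivAt.hasDerivWithinAt) hφ_int
          (fun x _ => le_max_left _ _)
    _ = ∫ _ in a..b, M := intervalIntegral.integral_congr_ae_restrict (by rwa [uIoc_of_le hab])
    _ = M * (b - a) := by simp [mul_comm]

lemma ContinuousAt.exists_lt_apply_sub {f : ℝ → ℝ} {x c : ℝ} (hf : ContinuousAt f x)
    (hc : c < f x) (hx : 0 < x) : ∃ ε, 0 < ε ∧ ε < x ∧ c < f (x - ε) := by
  have hsub : Tendsto (fun ε => x - ε) (𝓝[>] 0) (𝓝 x) := by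
    simpa using (tendsto_const_nhds.sub tendsto_id : Tendsto (fun ε : ℝ => x - ε) (𝓝 0) _).mono_left
      nhdsWithin_le_nhds
  have hlt : ∀ᶠ ε in 𝓝[>] (0 : ℝ), ε < x := nhdsWithin_le_nhds (eventually_lt_nhds hx)
  exact (eventually_mem_nhdsWithin.and
    (hlt.and (hsub.eventually (hf.eventually (lt_mem_nhds hc))))).exists

lemma le_of_le_of_forall_lt_on_Ioc_imp_le {f : ℝ → ℝ} {a b L : ℝ} (hab : a ≤ b)
    (hf : ContinuousOn f (Icc a b)) (ha : f a ≤ L)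
    (hdec : ∀ s ∈ Icc a b, (∀ x ∈ Ioc s b, L < f x) → f b ≤ f s) : f b ≤ L := by
  set S := Icc a b ∩ f ⁻¹' Iic L
  have hS_closed : IsClosed S := hf.preimage_isClosed_of_isClosed isClosed_Icc isClosed_Iic
  have hS_bdd : BddAbove S := ⟨b, fun x hx => hx.1.2⟩
  have hs : sSup S ∈ S := hS_closed.csSup_mem ⟨a, ⟨le_rfl, hab⟩, ha⟩ hS_bdd
  have hlast : ∀ x ∈ Ioc (sSup S) b, L < f x := fun x hx =>
    not_le.mp fun hfx => hx.1.not_ge (le_csSup hS_bdd ⟨⟨hs.1.1.trans hx.1.le, hx.2⟩, hfx⟩)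
  exact (hdec _ hs.1 hlast).trans hs.2

lemma exists_le_of_forall_decay {v : ℝ → ℝ} {L d : ℝ} (hL : 0 ≤ L) (hd : 0 < d)
    (hdecay : ∀ t ≥ (0 : ℝ), (∀ x ∈ Ioc 0 t, L < v x) → v t ≤ v 0 - d * t) :
    ∃ t ≥ (0 : ℝ), v t ≤ L := by
  by_contra! hgt
  set T := v 0 / d + 1
  have hT : 0 ≤ T := by have := hL.trans (hgt 0 le_rfl).le; positivity
  have hvT := hdecay T hT fun x hx => hgt x hx.1.le
  have hdT : d * T = v 0 + d := by simp only [T]; field_simp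
  linarith [hgt T hT]

lemma sub_le_of_dissipation {α σ w v : ℝ → ℝ} {c : ℝ} (hα : MonotoneOn α (Ici 0)) (hv_nonneg : ∀ t ≥ (0 : ℝ), 0 ≤ v t)
    (hv_diff : ∀ t ≥ (0 : ℝ), DifferentiableAt ℝ v t)
    (hineq : ∀ᵐ t ∂volume.restrict (Ici (0 : ℝ)), deriv v t ≤ -α (v t) + σ (w t))
    (hσw : ∀ t ≥ (0 : ℝ), σ (w t) ≤ c) {L s t : ℝ} (hL : 0 ≤ L) (hs : 0 ≤ s) (hst : s ≤ t)
    (hge : ∀ x ∈ Ioc s t, L ≤ v x) : v t ≤ v s - (α L - c) * (t - s) := by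
  have hsub : Ioc s t ⊆ Ici 0 := fun x hx => hs.trans hx.1.le
  have hderiv : ∀ᵐ x ∂volume.restrict (Ioc s t), deriv v x ≤ -(α L - c) := by
    filter_upwards [ae_restrict_of_ae_restrict_of_subset hsub hineq,
      ae_restrict_mem measurableSet_Ioc] with x hx hmem
    have hx0 : 0 ≤ x := hsub hmem
    linarith [hα hL (hv_nonneg x hx0) (hge x hmem), hσw x hx0]
  linarith [sub_le_mul_sub_of_deriv_le_ae hst (fun x hx => hv_diff x (hs.trans hx.1)) hderiv]

theorem ultimate_bound_of_dissipation_general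
    (α σ : ℝ → ℝ) (hα : IsClassK α)
    (w : ℝ → ℝ)
    (v : ℝ → ℝ) (hv_nonneg : ∀ t ≥ (0:ℝ), 0 ≤ v t)
    (hv_diff : ∀ t ≥ (0:ℝ), DifferentiableAt ℝ v t)
    (hineq : ∀ᵐ t ∂(MeasureTheory.volume.restrict (Set.Ici (0:ℝ))),
      deriv v t ≤ -α (v t) + σ (w t))
    (H : ℝ) (hH : 0 < H)
    (hsmall : ∃ c : ℝ, c < α H ∧ ∀ t ≥ (0:ℝ), σ (w t) ≤ c) :
    ∃ T ≥ (0:ℝ), ∃ ε : ℝ, 0 < ε ∧ ε < H ∧ ∀ t ≥ T, v t ≤ H - ε := by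
  obtain ⟨c, hc, hσw⟩ := hsmall
  obtain ⟨ε, hε, hεH, hcε⟩ :=
    ((hα.1 H hH.le).continuousAt (Ici_mem_nhds hH)).exists_lt_apply_sub hc hH
  have hL : 0 ≤ H - ε := by linarith
  have hdecay : ∀ s t, 0 ≤ s → s ≤ t → (∀ x ∈ Ioc s t, H - ε < v x) →
      v t ≤ v s - (α (H - ε) - c) * (t - s) := fun s t hs hst hgt =>
    sub_le_of_dissipation hα.2.1.monotoneOn hv_nonneg hv_diff hineq hσw hL hs hst
      fun x hx => (hgt x hx).le
  obtain ⟨t₀, ht₀, hvt₀⟩ := exists_le_of_forall_decay hL (sub_pos.mpr hcε)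
    fun t ht hgt => by simpa using hdecay 0 t le_rfl ht hgt
  refine ⟨t₀, ht₀, ε, hε, hεH, fun t ht => ?_⟩
  refine le_of_le_of_forall_lt_on_Ioc_imp_le ht
    (fun x hx => (hv_diff x (ht₀.trans hx.1)).continuousAt.continuousWithinAt) hvt₀
    fun s hs hgt => ?_
  linarith [hdecay s t (ht₀.trans hs.1) hs.2 hgt,
    mul_nonneg (sub_pos.mpr hcε).le (sub_nonneg.mpr hs.2)]

/-- Ultimate-bound property: if v' ≤ -α(v) + σ(w) almost everywhere on
[0,∞) with class K functions α, σ and sup_{t≥0} σ(w(t)) < α(H), then v is eventually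
bounded by H - ε for some ε ∈ (0,H). -/
theorem ultimate_bound_of_dissipation
    (α σ : ℝ → ℝ) (hα : IsClassK α) (hσ : IsClassK σ)
    (w : ℝ → ℝ) (hw_meas : Measurable w)
    (hw_nonneg : ∀ t ≥ (0:ℝ), 0 ≤ w t)
    (hw_locbdd : ∀ T : ℝ, ∃ C : ℝ,
      ∀ᵐ t ∂(MeasureTheory.volume.restrict (Set.Icc (0:ℝ) T)), |w t| ≤ C)
    (v : ℝ → ℝ) (hv_nonneg : ∀ t ≥ (0:ℝ), 0 ≤ v t)
    (hv_diff : ∀ t ≥ (0:ℝ), DifferentiableAt ℝ v t)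
    (hineq : ∀ᵐ t ∂(MeasureTheory.volume.restrict (Set.Ici (0:ℝ))),
      deriv v t ≤ -α (v t) + σ (w t))
    (H : ℝ) (hH : 0 < H)
    (hsmall : ∃ c : ℝ, c < α H ∧ ∀ t ≥ (0:ℝ), σ (w t) ≤ c) :
    ∃ T ≥ (0:ℝ), ∃ ε : ℝ, 0 < ε ∧ ε < H ∧ ∀ t ≥ T, v t ≤ H - ε :=
  ultimate_bound_of_dissipation_general α σ hα w v hv_nonneg hv_diff hineq H hH hsmall
end

section
/- Let β, γ, μ > 0 and let S, I : [0,∞) → [0,∞) be differentiable nonnegative functions with I'(t) = β I(t) S(t) − γ I(t) − μ I(t) for all t ≥ 0. Then the function V_I(t) := log(1 + I(t)) satisfies V_I'(t) ≤ −(γ+μ) I(t)/(1 + I(t)) + β S(t) for all t ≥ 0. -/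
theorem mul_div_one_add_le {a x : ℝ} (ha : 0 ≤ a) (hx : 0 ≤ x) : a * x / (1 + x) ≤ a := by
  rw [div_le_iff₀ (by linarith)]
  nlinarith

theorem sir_I_subsystem_iISS_lyapunov_general
    (β γ μ : ℝ) (hβ : 0 < β)
    (S I : ℝ → ℝ)
    (hS_nonneg : ∀ t ≥ (0:ℝ), 0 ≤ S t)
    (hI_nonneg : ∀ t ≥ (0:ℝ), 0 ≤ I t)
    (hI : ∀ t ≥ (0:ℝ), HasDerivAt I (β * I t * S t - γ * I t - μ * I t) t) :
    ∀ t ≥ (0:ℝ),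
      deriv (fun s => Real.log (1 + I s)) t ≤
        -((γ + μ) * I t / (1 + I t)) + β * S t := by
  intro t ht
  have hpos : 0 < 1 + I t := by linarith [hI_nonneg t ht]
  rw [(((hI t ht).const_add 1).log hpos.ne').deriv]
  -- The saturation I / (1 + I) ≤ 1 turns the bilinear infection term into the input bound β S.
  have hsat : β * S t * I t / (1 + I t) ≤ β * S t :=
    mul_div_one_add_le (mul_nonneg hβ.le (hS_nonneg t ht)) (hI_nonneg t ht)
  calc (β * I t * S t - γ * I t - μ * I t) / (1 + I t)
      = -((γ + μ) * I t / (1 + I t)) + β * S t * I t / (1 + I t) := by ring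
    _ ≤ -((γ + μ) * I t / (1 + I t)) + β * S t := by linarith

/-- The I-subsystem of the SIR model admits V_I = log(1+I) as an iISS
Lyapunov function with respect to the input S. -/
theorem sir_I_subsystem_iISS_lyapunov
    (β γ μ : ℝ) (hβ : 0 < β) (hγ : 0 < γ) (hμ : 0 < μ)
    (S I : ℝ → ℝ)
    (hS_nonneg : ∀ t ≥ (0:ℝ), 0 ≤ S t)
    (hI_nonneg : ∀ t ≥ (0:ℝ), 0 ≤ I t)
    (hI : ∀ t ≥ (0:ℝ), HasDerivAt I (β * I t * S t - γ * I t - μ * I t) t) :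
    ∀ t ≥ (0:ℝ),
      deriv (fun s => Real.log (1 + I s)) t ≤
        -((γ + μ) * I t / (1 + I t)) + β * S t :=
  sir_I_subsystem_iISS_lyapunov_general β γ μ hβ S I hS_nonneg hI_nonneg hI
end

section
/- Let β, γ, μ > 0 and set H := (γ+μ)/β. Let S, I, R : [0,∞) → [0,∞) be differentiable nonnegative functions satisfying the SIR model S' = B − μS − βIS, I' = βIS − γI − μI, R' = γI − μR for all t ≥ 0, where B : [0,∞) → [0,∞) is measurable and satisfies sup_{t≥0} B(t) < μH. Then lim_{t→∞} I(t) = 0 and lim_{t→∞} R(t) = 0. -/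
/-!
Since `(S + I)' = B - μ (S + I) - γ I ≤ c - μ (S + I)` with `c < μ H`, Grönwall's inequality
eventually pushes `S ≤ S + I` below some `L < H`. From then on
`I' = β I (S - H) ≤ -β (H - L) I`, so `I` decays exponentially, and then `R`, driven by the
vanishing source `γ I` and damped at rate `μ`, tends to `0` as well.
-/

open Filter Topology

lemma tendsto_gronwallBound_of_neg {δ K ε : ℝ} (hK : K < 0) :
    Tendsto (gronwallBound δ K ε) atTop (𝓝 (-ε / K)) := by
  have hexp : Tendsto (fun x => Real.exp (K * x)) atTop (𝓝 0) :=
    Real.tendsto_exp_atBot.comp (tendsto_id.const_mul_atTop_of_neg hK)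
  rw [gronwallBound_of_K_ne_0 hK.ne]
  convert (hexp.const_mul δ).add ((hexp.sub_const 1).const_mul (ε / K)) using 2
  ring

lemma eventually_lt_of_hasDerivAt_le_sub_mul {f f' : ℝ → ℝ} {k μ L : ℝ} (hμ : 0 < μ)
    (hL : k / μ < L) (hf : ∀ᶠ t in atTop, HasDerivAt f (f' t) t ∧ f' t ≤ k - μ * f t) :
    ∀ᶠ t in atTop, f t < L := by
  obtain ⟨a, ha⟩ := eventually_atTop.1 hf
  have hbound : ∀ t ≥ a, f t ≤ gronwallBound (f a) (-μ) k (t - a) := fun t ht =>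
    le_gronwallBound_of_liminf_deriv_right_le (b := t)
      (fun x hx => (ha x hx.1).1.continuousAt.continuousWithinAt)
      (fun x hx _ hr => (ha x hx.1).1.hasDerivWithinAt.liminf_right_slope_le hr) le_rfl
      (fun x hx => by linarith [(ha x hx.1).2]) t ⟨ht, le_rfl⟩
  have hlim : Tendsto (fun t => gronwallBound (f a) (-μ) k (t - a)) atTop (𝓝 (k / μ)) := by
    rw [← neg_div_neg_eq]
    exact (tendsto_gronwallBound_of_neg (neg_neg_of_pos hμ)).comp
      (tendsto_atTop_add_const_right _ _ tendsto_id)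
  filter_upwards [hlim.eventually (gt_mem_nhds hL), eventually_ge_atTop a] with t hlt ht
  exact (hbound t ht).trans_lt hlt

lemma tendsto_zero_of_hasDerivAt_le_sub_mul {f f' : ℝ → ℝ} {μ : ℝ} (hμ : 0 < μ)
    (hf₀ : ∀ᶠ t in atTop, 0 ≤ f t) (hf : ∀ᶠ t in atTop, HasDerivAt f (f' t) t)
    (hle : ∀ k > 0, ∀ᶠ t in atTop, f' t ≤ k - μ * f t) :
    Tendsto f atTop (𝓝 0) := by
  refine tendsto_order.2 ⟨fun a ha => hf₀.mono fun t ht => ha.trans_le ht, fun ε hε => ?_⟩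
  have hk : μ * ε / 2 / μ < ε := by
    rw [mul_div_assoc, mul_div_cancel_left₀ _ hμ.ne']
    linarith
  exact eventually_lt_of_hasDerivAt_le_sub_mul hμ hk (hf.and (hle _ (by positivity)))

theorem sir_disease_eradication_general
    (β γ μ : ℝ) (hβ : 0 < β) (hγ : 0 < γ) (hμ : 0 < μ)
    (B : ℝ → ℝ)
    (hB_small : ∃ c : ℝ, c < μ * ((γ + μ) / β) ∧ ∀ t ≥ (0:ℝ), B t ≤ c)
    (S I R : ℝ → ℝ)
    (hI_nonneg : ∀ t ≥ (0:ℝ), 0 ≤ I t)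
    (hR_nonneg : ∀ t ≥ (0:ℝ), 0 ≤ R t)
    (hS : ∀ t ≥ (0:ℝ), HasDerivAt S (B t - μ * S t - β * I t * S t) t)
    (hI : ∀ t ≥ (0:ℝ), HasDerivAt I (β * I t * S t - γ * I t - μ * I t) t)
    (hR : ∀ t ≥ (0:ℝ), HasDerivAt R (γ * I t - μ * R t) t) :
    Filter.Tendsto I Filter.atTop (nhds 0) ∧
      Filter.Tendsto R Filter.atTop (nhds 0) := by
  obtain ⟨c, hc, hBc⟩ := hB_small
  obtain ⟨L, hcL, hLH⟩ := exists_between ((div_lt_iff₀' hμ).2 hc)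
  have hβH : β * ((γ + μ) / β) = γ + μ := mul_div_cancel₀ _ hβ.ne'
  have hpos : ∀ᶠ t in atTop, (0:ℝ) ≤ t := eventually_ge_atTop 0
  have hN : ∀ᶠ t in atTop, S t + I t < L :=
    eventually_lt_of_hasDerivAt_le_sub_mul (f := S + I)
      (f' := fun t => B t - μ * (S t + I t) - γ * I t) hμ hcL <| hpos.mono fun t ht =>
        ⟨((hS t ht).add (hI t ht)).congr_deriv (by ring),
          by simp only [Pi.add_apply]; nlinarith [hBc t ht, hI_nonneg t ht, hγ]⟩
  have hI_lim : Tendsto I atTop (𝓝 0) := by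
    refine tendsto_zero_of_hasDerivAt_le_sub_mul (mul_pos hβ (sub_pos.2 hLH))
      (hpos.mono hI_nonneg) (hpos.mono hI) fun k hk => ?_
    filter_upwards [hN, hpos] with t hNt ht
    have hIt := hI_nonneg t ht
    nlinarith [mul_nonneg hβ.le hIt]
  refine ⟨hI_lim, tendsto_zero_of_hasDerivAt_le_sub_mul hμ
    (hpos.mono hR_nonneg) (hpos.mono hR) fun k hk => ?_⟩
  filter_upwards [hI_lim.eventually (gt_mem_nhds (div_pos hk hγ))] with t hIt
  linarith [(lt_div_iff₀' hγ).1 hIt]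

/-- In the SIR model, if the newborn/immigration rate satisfies
sup_{t≥0} B(t) < μH with H = (γ+μ)/β, then the infected and recovered populations
converge to zero. -/
theorem sir_disease_eradication
    (β γ μ : ℝ) (hβ : 0 < β) (hγ : 0 < γ) (hμ : 0 < μ)
    (B : ℝ → ℝ) (hB_meas : Measurable B) (hB_nonneg : ∀ t ≥ (0:ℝ), 0 ≤ B t)
    (hB_small : ∃ c : ℝ, c < μ * ((γ + μ) / β) ∧ ∀ t ≥ (0:ℝ), B t ≤ c)
    (S I R : ℝ → ℝ)
    (hS_nonneg : ∀ t ≥ (0:ℝ), 0 ≤ S t)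
    (hI_nonneg : ∀ t ≥ (0:ℝ), 0 ≤ I t)
    (hR_nonneg : ∀ t ≥ (0:ℝ), 0 ≤ R t)
    (hS : ∀ t ≥ (0:ℝ), HasDerivAt S (B t - μ * S t - β * I t * S t) t)
    (hI : ∀ t ≥ (0:ℝ), HasDerivAt I (β * I t * S t - γ * I t - μ * I t) t)
    (hR : ∀ t ≥ (0:ℝ), HasDerivAt R (γ * I t - μ * R t) t) :
    Filter.Tendsto I Filter.atTop (nhds 0) ∧
      Filter.Tendsto R Filter.atTop (nhds 0) :=
  sir_disease_eradication_general β γ μ hβ hγ hμ B hB_small S I R hI_nonneg hR_nonneg hS hI hR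
end

section
/- Let β, γ, μ > 0, set H := (γ+μ)/β, and let B ≥ 0 be a constant with B < μH. Let S, I, R : [0,∞) → [0,∞) be differentiable nonnegative functions satisfying the SIR model S' = B − μS − βIS, I' = βIS − γI − μI, R' = γI − μR for all t ≥ 0. Then lim_{t→∞} (S(t), I(t), R(t)) = (B/μ, 0, 0), i.e., the solution converges to the disease-free equilibrium. -/
/-!
The total population `N = S + I + R` obeys `N' = B - μ N`, so `N → B/μ`. Hence eventually
`S ≤ N < M` for some `M < (γ + μ)/β`, which gives `I' ≤ -(γ + μ - β M) I`: the infection decays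
exponentially. Then `R' = γ I - μ R` with `γ I → 0` forces `R → 0`, and `S = N - I - R → B/μ`.

Both linear limits are instances of: `f' = g - a f` with `a > 0` and `g → L` forces `f → L/a`.
For `c > L/a`, eventually `g ≤ a c`, and then `e^{a t} (f - c)` is antitone.
-/

open Filter Set Topology Real

theorem le_mul_exp_of_hasDerivAt_le_neg_mul {u u' : ℝ → ℝ} {a T : ℝ}
    (hu : ∀ t ≥ T, HasDerivAt u (u' t) t) (hle : ∀ t ≥ T, u' t ≤ -a * u t) :
    ∀ t ≥ T, u t ≤ u T * exp (-a * (t - T)) := by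
  have hderiv : ∀ t ≥ T,
      HasDerivAt (fun t => exp (t * a) * u t) (exp (t * a) * (a * u t + u' t)) t :=
    fun t ht => ((hasDerivAt_mul_const a).exp.mul (hu t ht)).congr_deriv (by ring)
  have hanti : AntitoneOn (fun t => exp (t * a) * u t) (Ici T) := by
    refine antitoneOn_of_hasDerivWithinAt_nonpos (f' := fun t => exp (t * a) * (a * u t + u' t))
      (convex_Ici T) (fun t ht => (hderiv t ht).continuousAt.continuousWithinAt)
      (fun t ht => ?_) (fun t ht => ?_)
    all_goals rw [interior_Ici] at ht
    · exact (hderiv t ht.le).hasDerivWithinAt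
    · exact mul_nonpos_of_nonneg_of_nonpos (exp_pos _).le (by linarith [hle t ht.le])
  intro t ht
  have hmono : exp (t * a) * u t ≤ exp (T * a) * u T := hanti self_mem_Ici ht ht
  calc u t = exp (-(t * a)) * (exp (t * a) * u t) := by rw [← mul_assoc, ← exp_add]; simp
    _ ≤ exp (-(t * a)) * (exp (T * a) * u T) := by gcongr
    _ = u T * exp (-a * (t - T)) := by
      rw [mul_left_comm, ← mul_assoc, ← exp_add, mul_comm]; ring_nf

theorem tendsto_mul_exp_neg_mul_sub_atTop {a : ℝ} (ha : 0 < a) (C T : ℝ) :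
    Tendsto (fun t => C * exp (-a * (t - T))) atTop (𝓝 0) := by
  have : Tendsto (fun t => -a * (t - T)) atTop atBot :=
    (tendsto_atTop_add_const_right _ (-T) tendsto_id).const_mul_atTop_of_neg (neg_lt_zero.2 ha)
  simpa using (tendsto_exp_atBot.comp this).const_mul C

theorem tendsto_zero_of_nonneg_of_hasDerivAt_le_neg_mul {u u' : ℝ → ℝ} {a : ℝ} (ha : 0 < a)
    (hu0 : ∀ᶠ t in atTop, 0 ≤ u t)
    (hu : ∀ᶠ t in atTop, HasDerivAt u (u' t) t ∧ u' t ≤ -a * u t) :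
    Tendsto u atTop (𝓝 0) := by
  obtain ⟨T, hT⟩ := eventually_atTop.1 hu
  refine squeeze_zero' hu0 ?_ (tendsto_mul_exp_neg_mul_sub_atTop ha (u T) T)
  filter_upwards [eventually_ge_atTop T] with t ht
  exact le_mul_exp_of_hasDerivAt_le_neg_mul (fun s hs => (hT s hs).1) (fun s hs => (hT s hs).2)
    t ht

theorem eventually_lt_of_hasDerivAt_sub_mul {f g : ℝ → ℝ} {a L u : ℝ} (ha : 0 < a)
    (hf : ∀ᶠ t in atTop, HasDerivAt f (g t - a * f t) t) (hg : Tendsto g atTop (𝓝 L))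
    (hu : L / a < u) : ∀ᶠ t in atTop, f t < u := by
  obtain ⟨c, hLc, hcu⟩ := exists_between hu
  have hgc : ∀ᶠ t in atTop, g t ≤ a * c :=
    hg.eventually (ge_mem_nhds (by rwa [div_lt_iff₀' ha] at hLc))
  obtain ⟨T, hT⟩ := eventually_atTop.1 (hf.and hgc)
  have hbound : ∀ t ≥ T, f t - c ≤ (f T - c) * exp (-a * (t - T)) :=
    le_mul_exp_of_hasDerivAt_le_neg_mul (fun t ht => (hT t ht).1.sub_const c)
      (fun t ht => by linarith [(hT t ht).2])
  filter_upwards [eventually_ge_atTop T,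
    (tendsto_mul_exp_neg_mul_sub_atTop ha (f T - c) T).eventually (gt_mem_nhds (sub_pos.2 hcu))]
    with t ht hsmall
  linarith [hbound t ht]

theorem tendsto_of_hasDerivAt_sub_mul {f g : ℝ → ℝ} {a L : ℝ} (ha : 0 < a)
    (hf : ∀ᶠ t in atTop, HasDerivAt f (g t - a * f t) t) (hg : Tendsto g atTop (𝓝 L)) :
    Tendsto f atTop (𝓝 (L / a)) := by
  refine tendsto_order.2
    ⟨fun l hl => ?_, fun u hu => eventually_lt_of_hasDerivAt_sub_mul ha hf hg hu⟩
  have hneg : ∀ᶠ t in atTop, HasDerivAt (fun t => -f t) (-g t - a * -f t) t :=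
    hf.mono fun t h => h.neg.congr_deriv (by ring)
  exact (eventually_lt_of_hasDerivAt_sub_mul ha hneg hg.neg (u := -l)
    (by rw [neg_div]; linarith)).mono fun t ht => neg_lt_neg_iff.1 ht

theorem sir_disease_free_equilibrium_general
    (β γ μ B : ℝ) (hβ : 0 < β) (hμ : 0 < μ)
    (hB_small : B < μ * ((γ + μ) / β))
    (S I R : ℝ → ℝ)
    (hI_nonneg : ∀ t ≥ (0:ℝ), 0 ≤ I t)
    (hR_nonneg : ∀ t ≥ (0:ℝ), 0 ≤ R t)
    (hS : ∀ t ≥ (0:ℝ), HasDerivAt S (B - μ * S t - β * I t * S t) t)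
    (hI : ∀ t ≥ (0:ℝ), HasDerivAt I (β * I t * S t - γ * I t - μ * I t) t)
    (hR : ∀ t ≥ (0:ℝ), HasDerivAt R (γ * I t - μ * R t) t) :
    Filter.Tendsto (fun t => (S t, I t, R t)) Filter.atTop
      (nhds (B / μ, 0, 0)) := by
  have hN : Tendsto (fun t => S t + I t + R t) atTop (𝓝 (B / μ)) :=
    tendsto_of_hasDerivAt_sub_mul hμ (g := fun _ => B) ((eventually_ge_atTop 0).mono fun t ht =>
      (((hS t ht).add (hI t ht)).add (hR t ht)).congr_deriv (by ring)) tendsto_const_nhds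
  obtain ⟨M, hBM, hMH⟩ := exists_between ((div_lt_iff₀' hμ).2 hB_small)
  have hI_lim : Tendsto I atTop (𝓝 0) := by
    refine tendsto_zero_of_nonneg_of_hasDerivAt_le_neg_mul
      (u' := fun t => β * I t * S t - γ * I t - μ * I t) (sub_pos.2 ((lt_div_iff₀' hβ).1 hMH))
      ((eventually_ge_atTop 0).mono hI_nonneg) ?_
    filter_upwards [eventually_ge_atTop 0, hN.eventually (gt_mem_nhds hBM)] with t ht hNM
    have hSM : S t ≤ M := by linarith [hI_nonneg t ht, hR_nonneg t ht]
    refine ⟨hI t ht, ?_⟩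
    nlinarith [mul_nonneg (mul_nonneg hβ.le (hI_nonneg t ht)) (sub_nonneg.2 hSM)]
  have hR_lim : Tendsto R atTop (𝓝 0) := by
    simpa using tendsto_of_hasDerivAt_sub_mul hμ ((eventually_ge_atTop 0).mono hR)
      (hI_lim.const_mul γ)
  have hS_lim : Tendsto S atTop (𝓝 (B / μ - 0 - 0)) :=
    ((hN.sub hI_lim).sub hR_lim).congr fun t => by ring
  rw [sub_zero, sub_zero] at hS_lim
  exact hS_lim.prodMk_nhds (hI_lim.prodMk_nhds hR_lim)

/-- In the SIR model with constant newborn/immigration rate B < μH,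
H = (γ+μ)/β, the solution converges to the disease-free equilibrium (B/μ, 0, 0). -/
theorem sir_disease_free_equilibrium
    (β γ μ B : ℝ) (hβ : 0 < β) (hγ : 0 < γ) (hμ : 0 < μ) (hB : 0 ≤ B)
    (hB_small : B < μ * ((γ + μ) / β))
    (S I R : ℝ → ℝ)
    (hS_nonneg : ∀ t ≥ (0:ℝ), 0 ≤ S t)
    (hI_nonneg : ∀ t ≥ (0:ℝ), 0 ≤ I t)
    (hR_nonneg : ∀ t ≥ (0:ℝ), 0 ≤ R t)
    (hS : ∀ t ≥ (0:ℝ), HasDerivAt S (B - μ * S t - β * I t * S t) t)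
    (hI : ∀ t ≥ (0:ℝ), HasDerivAt I (β * I t * S t - γ * I t - μ * I t) t)
    (hR : ∀ t ≥ (0:ℝ), HasDerivAt R (γ * I t - μ * R t) t) :
    Filter.Tendsto (fun t => (S t, I t, R t)) Filter.atTop
      (nhds (B / μ, 0, 0)) :=
  sir_disease_free_equilibrium_general β γ μ B hβ hμ hB_small S I R hI_nonneg hR_nonneg hS hI hR
end

section
/- Let β, γ, ε, μ > 0 and let S, E, I : [0,∞) → [0,∞) be differentiable nonnegative functions with E'(t) = β I(t) S(t) − (ε+μ) E(t) and I'(t) = ε E(t) − (γ+μ) I(t) for all t ≥ 0. Then the function V_{EI}(t) := log(1 + E(t) + I(t)) satisfies V_{EI}'(t) ≤ −μ (E(t) + I(t))/(1 + E(t) + I(t)) + β S(t) for all t ≥ 0. -/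
/- Along solutions, (E + I)' = β I S − γ I − μ (E + I), since the transfer term ε E cancels.
Dividing by 1 + E + I, the infection term contributes at most β S because I ≤ 1 + E + I,
and the recovery term −γ I is nonpositive. -/

lemma seis_EI_flow_div_le {β γ ε μ S E I : ℝ} (hβ : 0 ≤ β) (hγ : 0 ≤ γ) (hS : 0 ≤ S)
    (hE : 0 ≤ E) (hI : 0 ≤ I) :
    ((β * I * S - (ε + μ) * E) + (ε * E - (γ + μ) * I)) / (1 + E + I) ≤
      -(μ * (E + I) / (1 + E + I)) + β * S := by
  have hpos : 0 < 1 + E + I := by linarith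
  have hinput : β * S * I / (1 + E + I) ≤ β * S :=
    div_le_of_le_mul₀ hpos.le (by positivity)
      (mul_le_mul_of_nonneg_left (by linarith) (by positivity))
  have hrecovery : 0 ≤ γ * I / (1 + E + I) := by positivity
  calc ((β * I * S - (ε + μ) * E) + (ε * E - (γ + μ) * I)) / (1 + E + I)
      = β * S * I / (1 + E + I) - γ * I / (1 + E + I) - μ * (E + I) / (1 + E + I) := by ring
    _ ≤ -(μ * (E + I) / (1 + E + I)) + β * S := by linarith

theorem seis_EI_subsystem_iISS_lyapunov_general
    (β γ ε μ : ℝ) (hβ : 0 < β) (hγ : 0 < γ)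
    (S E I : ℝ → ℝ)
    (hS_nonneg : ∀ t ≥ (0:ℝ), 0 ≤ S t)
    (hE_nonneg : ∀ t ≥ (0:ℝ), 0 ≤ E t)
    (hI_nonneg : ∀ t ≥ (0:ℝ), 0 ≤ I t)
    (hE : ∀ t ≥ (0:ℝ), HasDerivAt E (β * I t * S t - (ε + μ) * E t) t)
    (hI : ∀ t ≥ (0:ℝ), HasDerivAt I (ε * E t - (γ + μ) * I t) t) :
    ∀ t ≥ (0:ℝ),
      deriv (fun s => Real.log (1 + E s + I s)) t ≤
        -(μ * (E t + I t) / (1 + E t + I t)) + β * S t := by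
  intro t ht
  have hpos : 0 < 1 + E t + I t := by linarith [hE_nonneg t ht, hI_nonneg t ht]
  have hV : HasDerivAt (fun s => Real.log (1 + E s + I s))
      (((β * I t * S t - (ε + μ) * E t) + (ε * E t - (γ + μ) * I t)) / (1 + E t + I t)) t :=
    (((hE t ht).const_add 1).add (hI t ht)).log hpos.ne'
  rw [hV.deriv]
  exact seis_EI_flow_div_le hβ.le hγ.le (hS_nonneg t ht) (hE_nonneg t ht) (hI_nonneg t ht)

/-- The EI-subsystem of the SEIS model admits V_EI = log(1+E+I) as an
iISS Lyapunov function with respect to the input S. -/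
theorem seis_EI_subsystem_iISS_lyapunov
    (β γ ε μ : ℝ) (hβ : 0 < β) (hγ : 0 < γ) (hε : 0 < ε) (hμ : 0 < μ)
    (S E I : ℝ → ℝ)
    (hS_nonneg : ∀ t ≥ (0:ℝ), 0 ≤ S t)
    (hE_nonneg : ∀ t ≥ (0:ℝ), 0 ≤ E t)
    (hI_nonneg : ∀ t ≥ (0:ℝ), 0 ≤ I t)
    (hE : ∀ t ≥ (0:ℝ), HasDerivAt E (β * I t * S t - (ε + μ) * E t) t)
    (hI : ∀ t ≥ (0:ℝ), HasDerivAt I (ε * E t - (γ + μ) * I t) t) :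
    ∀ t ≥ (0:ℝ),
      deriv (fun s => Real.log (1 + E s + I s)) t ≤
        -(μ * (E t + I t) / (1 + E t + I t)) + β * S t :=
  seis_EI_subsystem_iISS_lyapunov_general β γ ε μ hβ hγ S E I hS_nonneg hE_nonneg hI_nonneg hE hI
end

section
/- Let β, γ, ε, μ > 0, set H := (γ+μ)(ε+μ)/(βε), and fix a ∈ (0,1). Let λ₂ := √(β a² H (ε+μ)/((γ+μ) ε)). Let S, E, I : [0,∞) → [0,∞) be differentiable nonnegative functions with E'(t) = β I(t) S(t) − (ε+μ) E(t) and I'(t) = ε E(t) − (γ+μ) I(t) for all t ≥ 0, and suppose S(t) ≤ a² H for all t ≥ T₀ for some T₀ ≥ 0. Then there exists c > 0 such that d/dt (E(t) + λ₂ I(t)) ≤ −c (E(t) + λ₂ I(t)) for all t ≥ T₀; consequently lim_{t→∞} E(t) = lim_{t→∞} I(t) = 0. -/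
/-!
With `S` frozen at `a²H`, the weight `w = a(ε+μ)/ε` (the paper's `λ₂`) makes `E + w I` a
Lyapunov function of the linear `EI`-system: since `w ε = a(ε+μ)` and `β a²H = a w (γ+μ)`,
its derivative is at most `-(1-a)((ε+μ)E + w(γ+μ)I) ≤ -c (E + w I)` with
`c = (1-a) min(ε+μ, γ+μ)`. Grönwall's inequality then gives exponential decay of `E + w I`,
hence of `E` and `I`.
-/

open Filter Topology Real Set

theorem le_mul_exp_of_hasDerivAt_le_neg_mul_s13 {V V' : ℝ → ℝ} {c T₀ t : ℝ}
    (hV : ∀ s ≥ T₀, HasDerivAt V (V' s) s) (hle : ∀ s ≥ T₀, V' s ≤ -c * V s)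
    (ht : T₀ ≤ t) :
    V t ≤ V T₀ * exp (-c * (t - T₀)) := by
  rw [← gronwallBound_ε0]
  refine le_gronwallBound_of_liminf_deriv_right_le (f' := V') (b := t) ?_ ?_ le_rfl ?_ t
    ⟨ht, le_rfl⟩
  · exact fun s hs => (hV s hs.1).continuousAt.continuousWithinAt
  · exact fun s hs r hr => (hV s hs.1).hasDerivWithinAt.liminf_right_slope_le hr
  · exact fun s hs => by simpa using hle s hs.1

theorem tendsto_zero_of_hasDerivAt_le_neg_mul {V V' : ℝ → ℝ} {c T₀ : ℝ} (hc : 0 < c)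
    (hV0 : ∀ t ≥ T₀, 0 ≤ V t) (hV : ∀ t ≥ T₀, HasDerivAt V (V' t) t)
    (hle : ∀ t ≥ T₀, V' t ≤ -c * V t) :
    Tendsto V atTop (𝓝 0) := by
  have hexp : Tendsto (fun t => V T₀ * exp (-c * (t - T₀))) atTop (𝓝 0) := by
    have h := tendsto_exp_atBot.comp
      ((tendsto_atTop_add_const_right _ (-T₀) tendsto_id).const_mul_atTop_of_neg
        (neg_neg_of_pos hc))
    simpa [sub_eq_add_neg] using h.const_mul (V T₀)
  exact squeeze_zero' (eventually_atTop.2 ⟨T₀, hV0⟩)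
    (eventually_atTop.2 ⟨T₀, fun t ht => le_mul_exp_of_hasDerivAt_le_neg_mul_s13 hV hle ht⟩) hexp

theorem tendsto_zero_of_nonneg_of_add_mul {α : Type*} {f g : α → ℝ} {l : Filter α}
    {w : ℝ} (hw : 0 < w) (hf : ∀ᶠ x in l, 0 ≤ f x) (hg : ∀ᶠ x in l, 0 ≤ g x)
    (h : Tendsto (fun x => f x + w * g x) l (𝓝 0)) :
    Tendsto f l (𝓝 0) ∧ Tendsto g l (𝓝 0) := by
  refine ⟨squeeze_zero' hf ((hf.and hg).mono fun x hx => ?_) h,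
    squeeze_zero' hg ((hf.and hg).mono fun x hx => ?_) (by simpa using h.div_const w)⟩
  · exact le_add_of_nonneg_right (mul_nonneg hw.le hx.2)
  · rw [le_div_iff₀ hw]
    linarith [hx.1]

theorem sqrt_eq_seis_weight {β γ ε μ a : ℝ} (hβ : 0 < β) (hγμ : 0 < γ + μ)
    (hε : 0 < ε) (hεμ : 0 ≤ ε + μ) (ha : 0 ≤ a) :
    √(β * a ^ 2 * ((γ + μ) * (ε + μ) / (β * ε)) * (ε + μ) / ((γ + μ) * ε)) =
      a * (ε + μ) / ε := by
  rw [show β * a ^ 2 * ((γ + μ) * (ε + μ) / (β * ε)) * (ε + μ) / ((γ + μ) * ε)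
      = (a * (ε + μ) / ε) ^ 2 by field_simp]
  exact sqrt_sq (by positivity)

theorem seis_weighted_deriv_le {β γ ε μ a S E I : ℝ} (hβ : 0 < β) (hε : 0 < ε)
    (hεμ : 0 ≤ ε + μ) (ha0 : 0 ≤ a) (ha1 : a ≤ 1) (hE : 0 ≤ E) (hI : 0 ≤ I)
    (hS : S ≤ a ^ 2 * ((γ + μ) * (ε + μ) / (β * ε))) :
    (β * I * S - (ε + μ) * E) + a * (ε + μ) / ε * (ε * E - (γ + μ) * I) ≤
      -((1 - a) * min (ε + μ) (γ + μ)) * (E + a * (ε + μ) / ε * I) := by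
  set w := a * (ε + μ) / ε
  have hw : 0 ≤ w := by positivity
  have hwε : w * ε = a * (ε + μ) := by simp only [w]; field_simp
  have hinfect : β * I * S ≤ a * w * (γ + μ) * I :=
    calc β * I * S ≤ β * I * (a ^ 2 * ((γ + μ) * (ε + μ) / (β * ε))) := by gcongr
      _ = a * w * (γ + μ) * I := by simp only [w]; field_simp
  have h1a : 0 ≤ 1 - a := by linarith
  have hminE : (1 - a) * min (ε + μ) (γ + μ) * E ≤ (1 - a) * (ε + μ) * E := by
    gcongr
    exact min_le_left _ _
  have hminI : (1 - a) * min (ε + μ) (γ + μ) * (w * I) ≤ (1 - a) * (γ + μ) * (w * I) := by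
    gcongr
    exact min_le_right _ _
  linear_combination hinfect + hminE + hminI + E * hwε

theorem seis_EI_subsystem_decay_general
    (β γ ε μ a T₀ : ℝ) (hβ : 0 < β) (hγ : 0 < γ) (hε : 0 < ε) (hμ : 0 < μ)
    (ha0 : 0 < a) (ha1 : a < 1) (hT₀ : 0 ≤ T₀)
    (S E I : ℝ → ℝ)
    (hE_nonneg : ∀ t ≥ (0:ℝ), 0 ≤ E t)
    (hI_nonneg : ∀ t ≥ (0:ℝ), 0 ≤ I t)
    (hE : ∀ t ≥ (0:ℝ), HasDerivAt E (β * I t * S t - (ε + μ) * E t) t)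
    (hI : ∀ t ≥ (0:ℝ), HasDerivAt I (ε * E t - (γ + μ) * I t) t)
    (hS_small : ∀ t ≥ T₀, S t ≤ a ^ 2 * ((γ + μ) * (ε + μ) / (β * ε))) :
    (∃ c : ℝ, 0 < c ∧ ∀ t ≥ T₀,
        deriv (fun s => E s +
          Real.sqrt (β * a ^ 2 * ((γ + μ) * (ε + μ) / (β * ε)) * (ε + μ) /
            ((γ + μ) * ε)) * I s) t ≤
          -c * (E t +
            Real.sqrt (β * a ^ 2 * ((γ + μ) * (ε + μ) / (β * ε)) * (ε + μ) /
              ((γ + μ) * ε)) * I t)) ∧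
      Filter.Tendsto E Filter.atTop (nhds 0) ∧
      Filter.Tendsto I Filter.atTop (nhds 0) := by
  rw [sqrt_eq_seis_weight hβ (by positivity) hε (by positivity) ha0.le]
  set w := a * (ε + μ) / ε
  set c := (1 - a) * min (ε + μ) (γ + μ)
  have hc : 0 < c := mul_pos (by linarith) (lt_min (by positivity) (by positivity))
  have hE_nonneg' (t : ℝ) (ht : t ≥ T₀) := hE_nonneg t (hT₀.trans ht)
  have hI_nonneg' (t : ℝ) (ht : t ≥ T₀) := hI_nonneg t (hT₀.trans ht)
  have hV (t : ℝ) (ht : t ≥ T₀) :=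
    (hE t (hT₀.trans ht)).add ((hI t (hT₀.trans ht)).const_mul w)
  have hdecay (t : ℝ) (ht : t ≥ T₀) := seis_weighted_deriv_le hβ hε (by positivity) ha0.le
    ha1.le (hE_nonneg' t ht) (hI_nonneg' t ht) (hS_small t ht)
  have hV_nonneg (t : ℝ) (ht : t ≥ T₀) : 0 ≤ E t + w * I t :=
    add_nonneg (hE_nonneg' t ht) (mul_nonneg (by positivity) (hI_nonneg' t ht))
  refine ⟨⟨c, hc, fun t ht => (hV t ht).deriv ▸ hdecay t ht⟩,
    tendsto_zero_of_nonneg_of_add_mul (by positivity) (eventually_atTop.2 ⟨0, hE_nonneg⟩)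
      (eventually_atTop.2 ⟨0, hI_nonneg⟩)
      (tendsto_zero_of_hasDerivAt_le_neg_mul hc hV_nonneg hV hdecay)⟩

/-- For the EI-subsystem of the SEIS model, if the input S eventually
stays below a²H with a ∈ (0,1) and H = (γ+μ)(ε+μ)/(βε), then the weighted population
E + λ₂I decays exponentially and E, I converge to zero. -/
theorem seis_EI_subsystem_decay
    (β γ ε μ a T₀ : ℝ) (hβ : 0 < β) (hγ : 0 < γ) (hε : 0 < ε) (hμ : 0 < μ)
    (ha0 : 0 < a) (ha1 : a < 1) (hT₀ : 0 ≤ T₀)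
    (S E I : ℝ → ℝ)
    (hS_nonneg : ∀ t ≥ (0:ℝ), 0 ≤ S t)
    (hE_nonneg : ∀ t ≥ (0:ℝ), 0 ≤ E t)
    (hI_nonneg : ∀ t ≥ (0:ℝ), 0 ≤ I t)
    (hE : ∀ t ≥ (0:ℝ), HasDerivAt E (β * I t * S t - (ε + μ) * E t) t)
    (hI : ∀ t ≥ (0:ℝ), HasDerivAt I (ε * E t - (γ + μ) * I t) t)
    (hS_small : ∀ t ≥ T₀, S t ≤ a ^ 2 * ((γ + μ) * (ε + μ) / (β * ε))) :
    (∃ c : ℝ, 0 < c ∧ ∀ t ≥ T₀,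
        deriv (fun s => E s +
          Real.sqrt (β * a ^ 2 * ((γ + μ) * (ε + μ) / (β * ε)) * (ε + μ) /
            ((γ + μ) * ε)) * I s) t ≤
          -c * (E t +
            Real.sqrt (β * a ^ 2 * ((γ + μ) * (ε + μ) / (β * ε)) * (ε + μ) /
              ((γ + μ) * ε)) * I t)) ∧
      Filter.Tendsto E Filter.atTop (nhds 0) ∧
      Filter.Tendsto I Filter.atTop (nhds 0) :=
  seis_EI_subsystem_decay_general β γ ε μ a T₀ hβ hγ hε hμ ha0 ha1 hT₀ S E I hE_nonneg hI_nonneg hE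
    hI hS_small
end

section
/- Let β, γ, ε, μ > 0 and set H := (γ+μ)(ε+μ)/(βε). Let S, E, I : [0,∞) → [0,∞) be differentiable nonnegative functions satisfying the SEIS model S' = B − μS − βIS + γI, E' = βIS − εE − μE, I' = εE − γI − μI for all t ≥ 0, where B : [0,∞) → [0,∞) is measurable with sup_{t≥0} B(t) < μH. Then lim_{t→∞} E(t) = 0 and lim_{t→∞} I(t) = 0; moreover, if B is a constant with B < μH, then lim_{t→∞} (S(t), E(t), I(t)) = (B/μ, 0, 0). -/
/-!
The total population `N = S + E + I` obeys `N' = B - μ N ≤ c - μ N`, so by Grönwall it is eventually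
below any level `s > c / μ`; take `s < H`. Once `S ≤ s`, the infected compartments satisfy a linear
differential inequality whose matrix `[[-(ε+μ), β s], [ε, -(γ+μ)]]` is stable exactly because
`β ε s < (γ+μ)(ε+μ)`; a positive row vector `(ε, b)` mapped by it to a negative one gives the
Lyapunov function `V = ε E + b I` with `V' ≤ -k V`, so `V`, and with it `E` and `I`, decay
exponentially. For constant `B = b` the population solves `N' = b - μ N` exactly, so `N → b / μ`
and `S = N - E - I → b / μ`.
-/

open Filter Topology Real

section LinearDifferentialInequality

variable {f f' : ℝ → ℝ} {a k L : ℝ}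

theorem tendsto_add_mul_exp_neg_mul_sub (hk : 0 < k) (C : ℝ) :
    Tendsto (fun t => L + C * exp (-k * (t - a))) atTop (𝓝 L) := by
  have hlin : Tendsto (fun t => -k * (t - a)) atTop atBot :=
    (tendsto_atTop_add_const_right _ _ tendsto_id).const_mul_atTop_of_neg (neg_lt_zero.2 hk)
  simpa using ((tendsto_exp_atBot.comp hlin).const_mul C).const_add L

theorem le_add_mul_exp_of_hasDerivAt_le (hf : ∀ t ≥ a, HasDerivAt f (f' t) t)
    (hf' : ∀ t ≥ a, f' t ≤ -k * (f t - L)) {t : ℝ} (ht : a ≤ t) :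
    f t ≤ L + (f a - L) * exp (-k * (t - a)) := by
  have hgronwall := le_gronwallBound_of_liminf_deriv_right_le (f := fun x => f x - L)
    (δ := f a - L) (K := -k) (ε := 0) (b := t)
    (fun x hx => ((hf x hx.1).continuousAt.sub continuousAt_const).continuousWithinAt)
    (fun x hx _ hr => ((hf x hx.1).sub_const L).hasDerivWithinAt.liminf_right_slope_le hr)
    le_rfl (fun x hx => by simpa using hf' x hx.1) t ⟨ht, le_rfl⟩
  rw [gronwallBound_ε0] at hgronwall
  linarith

theorem eventually_le_of_hasDerivAt_le (hk : 0 < k) (hf : ∀ t ≥ a, HasDerivAt f (f' t) t)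
    (hf' : ∀ t ≥ a, f' t ≤ -k * (f t - L)) {L' : ℝ} (hL : L < L') :
    ∀ᶠ t in atTop, f t ≤ L' := by
  filter_upwards [(tendsto_add_mul_exp_neg_mul_sub hk (f a - L)).eventually_le_const hL,
    eventually_ge_atTop a] with t hbound ht
  exact (le_add_mul_exp_of_hasDerivAt_le hf hf' ht).trans hbound

theorem tendsto_of_hasDerivAt_le_of_eventually_le (hk : 0 < k)
    (hf : ∀ t ≥ a, HasDerivAt f (f' t) t) (hf' : ∀ t ≥ a, f' t ≤ -k * (f t - L))
    (hlow : ∀ᶠ t in atTop, L ≤ f t) : Tendsto f atTop (𝓝 L) :=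
  tendsto_of_tendsto_of_tendsto_of_le_of_le' tendsto_const_nhds
    (tendsto_add_mul_exp_neg_mul_sub hk (f a - L)) hlow
    ((eventually_ge_atTop a).mono fun _ ht => le_add_mul_exp_of_hasDerivAt_le hf hf' ht)

theorem tendsto_of_hasDerivAt_eq (hk : 0 < k) (hf : ∀ t ≥ a, HasDerivAt f (f' t) t)
    (hf' : ∀ t ≥ a, f' t = -k * (f t - L)) : Tendsto f atTop (𝓝 L) := by
  refine (tendsto_add_mul_exp_neg_mul_sub (a := a) hk (f a - L)).congr' ?_
  filter_upwards [eventually_ge_atTop a] with t ht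
  have hupper := le_add_mul_exp_of_hasDerivAt_le hf (fun s hs => (hf' s hs).le) ht
  have hlower := le_add_mul_exp_of_hasDerivAt_le (f := fun x => -f x) (f' := fun x => -f' x)
    (L := -L) (fun s hs => (hf s hs).neg) (fun s hs => (by rw [hf' s hs]; ring : _ = _).le) ht
  linarith

end LinearDifferentialInequality

theorem tendsto_zero_of_tendsto_mul_add_mul {α : Type*} {l : Filter α} {x y : α → ℝ} {a b : ℝ}
    (ha : 0 < a) (hb : 0 ≤ b) (hx : ∀ᶠ t in l, 0 ≤ x t) (hy : ∀ᶠ t in l, 0 ≤ y t)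
    (h : Tendsto (fun t => a * x t + b * y t) l (𝓝 0)) : Tendsto x l (𝓝 0) := by
  refine squeeze_zero' hx ?_ (by simpa using h.const_mul a⁻¹)
  filter_upwards [hy] with t hyt
  rw [le_inv_mul_iff₀ ha]
  nlinarith

theorem seis_exists_lyapunov {β γ ε μ s : ℝ} (hβ : 0 ≤ β) (hε : 0 ≤ ε) (hγμ : 0 < γ + μ)
    (hεμ : 0 < ε + μ) (hs : β * ε * s < (γ + μ) * (ε + μ)) :
    ∃ b k : ℝ, 0 < b ∧ 0 < k ∧ ∀ S E I : ℝ, 0 ≤ E → 0 ≤ I → S ≤ s →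
      ε * (β * I * S - ε * E - μ * E) + b * (ε * E - γ * I - μ * I) ≤ -k * (ε * E + b * I) := by
  obtain ⟨b, hb, hbε⟩ := exists_between
    (max_lt hεμ ((div_lt_iff₀ hγμ).2 (by linarith) : β * ε * s / (γ + μ) < ε + μ))
  obtain ⟨hb0, hbs⟩ := max_lt_iff.1 hb
  have hbs' : β * ε * s < b * (γ + μ) := (div_lt_iff₀ hγμ).1 hbs
  refine ⟨b, min (ε + μ - b) (γ + μ - β * ε * s / b), hb0,
    lt_min (by linarith) (by rw [sub_pos, div_lt_iff₀ hb0]; linarith), ?_⟩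
  intro S E I hE hI hS
  set k := min (ε + μ - b) (γ + μ - β * ε * s / b)
  have hkE : k * ε * E ≤ (ε + μ - b) * ε * E :=
    mul_le_mul_of_nonneg_right (mul_le_mul_of_nonneg_right (min_le_left _ _) hε) hE
  have hkI : k * b ≤ b * (γ + μ) - β * ε * s := by
    have := mul_le_mul_of_nonneg_right (min_le_right (ε + μ - b) (γ + μ - β * ε * s / b)) hb0.le
    rwa [sub_mul, div_mul_cancel₀ _ hb0.ne', mul_comm (γ + μ)] at this
  have hSI : β * ε * S * I ≤ β * ε * s * I :=
    mul_le_mul_of_nonneg_right (mul_le_mul_of_nonneg_left hS (mul_nonneg hβ hε)) hI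
  nlinarith [mul_le_mul_of_nonneg_right hkI hI]

theorem seis_tendsto_infected_zero {β γ ε μ s : ℝ} {S E I : ℝ → ℝ} (hβ : 0 ≤ β) (hε : 0 < ε)
    (hγμ : 0 < γ + μ) (hεμ : 0 < ε + μ) (hs : β * ε * s < (γ + μ) * (ε + μ))
    (hE_nonneg : ∀ t ≥ (0:ℝ), 0 ≤ E t) (hI_nonneg : ∀ t ≥ (0:ℝ), 0 ≤ I t)
    (hE : ∀ t ≥ (0:ℝ), HasDerivAt E (β * I t * S t - ε * E t - μ * E t) t)
    (hI : ∀ t ≥ (0:ℝ), HasDerivAt I (ε * E t - γ * I t - μ * I t) t)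
    (hS_le : ∀ᶠ t in atTop, S t ≤ s) :
    Tendsto E atTop (𝓝 0) ∧ Tendsto I atTop (𝓝 0) := by
  obtain ⟨b, k, hb, hk, hV⟩ := seis_exists_lyapunov hβ hε.le hγμ hεμ hs
  obtain ⟨T, hT⟩ := eventually_atTop.1 (hS_le.and (eventually_ge_atTop 0))
  have hV_lim : Tendsto (fun t => ε * E t + b * I t) atTop (𝓝 0) :=
    tendsto_of_hasDerivAt_le_of_eventually_le hk (a := T)
      (fun t ht => ((hE t (hT t ht).2).const_mul ε).add ((hI t (hT t ht).2).const_mul b))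
      (fun t ht => by
        rw [sub_zero]
        exact hV _ _ _ (hE_nonneg t (hT t ht).2) (hI_nonneg t (hT t ht).2) (hT t ht).1)
      ((eventually_ge_atTop 0).mono fun t ht =>
        add_nonneg (mul_nonneg hε.le (hE_nonneg t ht)) (mul_nonneg hb.le (hI_nonneg t ht)))
  have hE_ev : ∀ᶠ t in atTop, 0 ≤ E t := (eventually_ge_atTop 0).mono hE_nonneg
  have hI_ev : ∀ᶠ t in atTop, 0 ≤ I t := (eventually_ge_atTop 0).mono hI_nonneg
  exact ⟨tendsto_zero_of_tendsto_mul_add_mul hε hb.le hE_ev hI_ev hV_lim,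
    tendsto_zero_of_tendsto_mul_add_mul hb hε.le hI_ev hE_ev
      (by simpa only [add_comm] using hV_lim)⟩

theorem seis_disease_eradication_general
    (β γ ε μ : ℝ) (hβ : 0 < β) (hγ : 0 < γ) (hε : 0 < ε) (hμ : 0 < μ)
    (B : ℝ → ℝ)
    (hB_small : ∃ c : ℝ, c < μ * ((γ + μ) * (ε + μ) / (β * ε)) ∧
      ∀ t ≥ (0:ℝ), B t ≤ c)
    (S E I : ℝ → ℝ)
    (hE_nonneg : ∀ t ≥ (0:ℝ), 0 ≤ E t)
    (hI_nonneg : ∀ t ≥ (0:ℝ), 0 ≤ I t)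
    (hS : ∀ t ≥ (0:ℝ),
      HasDerivAt S (B t - μ * S t - β * I t * S t + γ * I t) t)
    (hE : ∀ t ≥ (0:ℝ),
      HasDerivAt E (β * I t * S t - ε * E t - μ * E t) t)
    (hI : ∀ t ≥ (0:ℝ), HasDerivAt I (ε * E t - γ * I t - μ * I t) t) :
    (Filter.Tendsto E Filter.atTop (nhds 0) ∧
      Filter.Tendsto I Filter.atTop (nhds 0)) ∧
    ∀ b : ℝ, (∀ t ≥ (0:ℝ), B t = b) →
      Filter.Tendsto (fun t => (S t, E t, I t)) Filter.atTop
        (nhds (b / μ, 0, 0)) := by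
  obtain ⟨c, hc, hBc⟩ := hB_small
  have hN : ∀ t ≥ (0:ℝ), HasDerivAt (fun t => S t + E t + I t) (B t - μ * (S t + E t + I t)) t :=
    fun t ht => (((hS t ht).add (hE t ht)).add (hI t ht)).congr_deriv (by ring)
  obtain ⟨s, hcs, hsH⟩ := exists_between
    ((div_lt_iff₀' hμ).2 hc : c / μ < (γ + μ) * (ε + μ) / (β * ε))
  have hS_le : ∀ᶠ t in atTop, S t ≤ s := by
    filter_upwards [eventually_le_of_hasDerivAt_le hμ hN
      (fun t ht => by linarith [hBc t ht, mul_div_cancel₀ c hμ.ne']) hcs,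
      eventually_ge_atTop 0] with t hNt ht
    linarith [hE_nonneg t ht, hI_nonneg t ht]
  obtain ⟨hE_lim, hI_lim⟩ := seis_tendsto_infected_zero hβ.le hε (by positivity) (by positivity)
    ((lt_div_iff₀' (by positivity)).1 hsH) hE_nonneg hI_nonneg hE hI hS_le
  refine ⟨⟨hE_lim, hI_lim⟩, fun b₀ hb₀ => ?_⟩
  have hN_lim : Tendsto (fun t => S t + E t + I t) atTop (𝓝 (b₀ / μ)) :=
    tendsto_of_hasDerivAt_eq hμ hN
      (fun t ht => by rw [hb₀ t ht]; linear_combination -mul_div_cancel₀ b₀ hμ.ne')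
  have hS_lim : Tendsto S atTop (𝓝 (b₀ / μ)) := by
    simpa using ((hN_lim.sub hE_lim).sub hI_lim).congr fun t => by ring
  exact hS_lim.prodMk_nhds (hE_lim.prodMk_nhds hI_lim)

/-- In the SEIS model, if sup_{t≥0} B(t) < μH with
H = (γ+μ)(ε+μ)/(βε), then E and I converge to zero; moreover, if B is constant, the
solution converges to the disease-free equilibrium (B/μ, 0, 0). -/
theorem seis_disease_eradication
    (β γ ε μ : ℝ) (hβ : 0 < β) (hγ : 0 < γ) (hε : 0 < ε) (hμ : 0 < μ)
    (B : ℝ → ℝ) (hB_meas : Measurable B) (hB_nonneg : ∀ t ≥ (0:ℝ), 0 ≤ B t)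
    (hB_small : ∃ c : ℝ, c < μ * ((γ + μ) * (ε + μ) / (β * ε)) ∧
      ∀ t ≥ (0:ℝ), B t ≤ c)
    (S E I : ℝ → ℝ)
    (hS_nonneg : ∀ t ≥ (0:ℝ), 0 ≤ S t)
    (hE_nonneg : ∀ t ≥ (0:ℝ), 0 ≤ E t)
    (hI_nonneg : ∀ t ≥ (0:ℝ), 0 ≤ I t)
    (hS : ∀ t ≥ (0:ℝ),
      HasDerivAt S (B t - μ * S t - β * I t * S t + γ * I t) t)
    (hE : ∀ t ≥ (0:ℝ),
      HasDerivAt E (β * I t * S t - ε * E t - μ * E t) t)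
    (hI : ∀ t ≥ (0:ℝ), HasDerivAt I (ε * E t - γ * I t - μ * I t) t) :
    (Filter.Tendsto E Filter.atTop (nhds 0) ∧
      Filter.Tendsto I Filter.atTop (nhds 0)) ∧
    ∀ b : ℝ, (∀ t ≥ (0:ℝ), B t = b) →
      Filter.Tendsto (fun t => (S t, E t, I t)) Filter.atTop
        (nhds (b / μ, 0, 0)) :=
  seis_disease_eradication_general β γ ε μ hβ hγ hε hμ B hB_small S E I hE_nonneg hI_nonneg hS hE hI
end

section
/- Let β, γ, ε, μ > 0, set H := (γ+μ)(ε+μ)/(βε), and let B ≥ 0 be a constant with B < μH. Let S, E, I, R : [0,∞) → [0,∞) be differentiable nonnegative functions satisfying the SEIR model S' = B − μS − βIS, E' = βIS − εE − μE, I' = εE − γI − μI, R' = γI − μR for all t ≥ 0. Then lim_{t→∞} (S(t), E(t), I(t), R(t)) = (B/μ, 0, 0, 0). -/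
/-!
Since `β I S ≥ 0`, the susceptibles satisfy `S' ≤ B - μ S`, so eventually `S < M` for any
`M > B / μ`; choose `M < H`. From then on `(E, I)` is a subsolution of the linear cooperative
system `E' = β M I - (ε + μ) E`, `I' = ε E - (γ + μ) I`, whose reproduction number
`β ε M / ((ε + μ) (γ + μ))` is below one, so a suitably weighted sum `W = p E + I` satisfies
`W' ≤ -r W` and decays exponentially. Once `I → 0`, the comparison principle
`f' ≤ g - a f, g → c ⟹ limsup f ≤ c / a` gives `R → 0` and `B / μ ≤ liminf S ≤ limsup S ≤ B / μ`.
-/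

open Filter Real Set Topology

section DifferentialInequality

variable {f f' g : ℝ → ℝ} {a c T : ℝ}

theorem le_of_hasDerivAt_le_sub_mul (ha : 0 < a) (hf : ∀ t ≥ T, HasDerivAt f (f' t) t)
    (hd : ∀ t ≥ T, f' t ≤ c - a * f t) {t : ℝ} (ht : T ≤ t) :
    f t ≤ c / a + (f T - c / a) * exp (-(a * (t - T))) := by
  -- `(f - c/a) e^{a t}` is nonincreasing.
  set F : ℝ → ℝ := fun s => (f s - c / a) * exp (a * s)
  have hF : ∀ s ≥ T, HasDerivAt F ((f' s - (c - a * f s)) * exp (a * s)) s := by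
    intro s hs
    refine (((hf s hs).sub_const (c / a)).mul ((hasDerivAt_id s).const_mul a).exp).congr_deriv ?_
    simp only [id, mul_one]
    field_simp
    ring
  have hanti : AntitoneOn F (Ici T) := by
    refine antitoneOn_of_hasDerivWithinAt_nonpos
      (f' := fun s => (f' s - (c - a * f s)) * exp (a * s)) (convex_Ici T)
      (fun s hs => (hF s hs).continuousAt.continuousWithinAt) (fun s hs => ?_) (fun s hs => ?_)
    · rw [interior_Ici] at hs
      exact (hF s hs.le).hasDerivWithinAt
    · rw [interior_Ici] at hs
      exact mul_nonpos_of_nonpos_of_nonneg (sub_nonpos.2 (hd s hs.le)) (exp_pos _).le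
  have key : F t ≤ F T := hanti self_mem_Ici ht ht
  have hexp : exp (-(a * (t - T))) = exp (a * T) / exp (a * t) := by
    rw [← exp_sub]; ring_nf
  rw [hexp, ← mul_div_assoc, ← sub_le_iff_le_add', le_div_iff₀ (exp_pos _)]
  exact key

theorem eventually_lt_of_hasDerivAt_le_sub_mul_s17 (ha : 0 < a)
    (hf : ∀ᶠ t in atTop, HasDerivAt f (f' t) t) (hd : ∀ᶠ t in atTop, f' t ≤ g t - a * f t)
    (hg : Tendsto g atTop (𝓝 c)) {b : ℝ} (hb : c / a < b) : ∀ᶠ t in atTop, f t < b := by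
  obtain ⟨c', hcc', hc'b⟩ := exists_between ((div_lt_iff₀ ha).1 hb)
  obtain ⟨T, hT⟩ := eventually_atTop.1 (hf.and (hd.and (hg.eventually (gt_mem_nhds hcc'))))
  have hbound : ∀ t ≥ T, f t ≤ c' / a + (f T - c' / a) * exp (-(a * (t - T))) :=
    fun t => le_of_hasDerivAt_le_sub_mul ha (fun s hs => (hT s hs).1)
      (fun s hs => by linarith [(hT s hs).2.1, (hT s hs).2.2])
  have hdecay : Tendsto (fun t => a * (t - T)) atTop atTop :=
    (tendsto_atTop_add_const_right atTop (-T) tendsto_id).const_mul_atTop ha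
  have hlim : Tendsto (fun t => c' / a + (f T - c' / a) * exp (-(a * (t - T)))) atTop
      (𝓝 (c' / a)) := by
    simpa using ((tendsto_exp_neg_atTop_nhds_zero.comp hdecay).const_mul _).const_add (c' / a)
  filter_upwards [hlim.eventually (gt_mem_nhds ((div_lt_iff₀ ha).2 hc'b)),
    eventually_ge_atTop T] with t hlt hle
  exact (hbound t hle).trans_lt hlt

theorem tendsto_zero_of_hasDerivAt_le_sub_mul_s17 (ha : 0 < a) (h0 : ∀ᶠ t in atTop, 0 ≤ f t)
    (hf : ∀ᶠ t in atTop, HasDerivAt f (f' t) t) (hd : ∀ᶠ t in atTop, f' t ≤ g t - a * f t)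
    (hg : Tendsto g atTop (𝓝 0)) : Tendsto f atTop (𝓝 0) :=
  tendsto_order.2 ⟨fun _ hb => h0.mono fun _ ht => hb.trans_le ht,
    fun _ hb => eventually_lt_of_hasDerivAt_le_sub_mul_s17 ha hf hd hg (by simpa using hb)⟩

end DifferentialInequality

theorem exists_lyapunov_weight {ε b κE κI : ℝ} (hε : 0 ≤ ε) (hb : 0 < b) (hκE : 0 < κE)
    (h : ε * b < κE * κI) : ∃ p > 0, ∃ r > 0, p * b + r ≤ κI ∧ ε + r * p ≤ p * κE := by
  have hthreshold : ε / κE < κI / b := (div_lt_div_iff₀ hκE hb).2 (by linarith)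
  obtain ⟨p, hεp, hpκ⟩ := exists_between hthreshold
  have hp : 0 < p := (div_nonneg hε hκE.le).trans_lt hεp
  have hpb : p * b < κI := (lt_div_iff₀ hb).1 hpκ
  have hpε : ε / p < κE := (div_lt_iff₀ hp).2 (by linarith [(div_lt_iff₀ hκE).1 hεp])
  refine ⟨p, hp, min (κI - p * b) (κE - ε / p), lt_min (by linarith) (by linarith),
    by linarith [min_le_left (κI - p * b) (κE - ε / p)], ?_⟩
  have := mul_le_mul_of_nonneg_right (min_le_right (κI - p * b) (κE - ε / p)) hp.le
  rw [sub_mul, div_mul_cancel₀ ε hp.ne'] at this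
  linarith

theorem tendsto_zero_of_cooperative_subthreshold {E I E' I' : ℝ → ℝ} {ε b κE κI : ℝ}
    (hε : 0 ≤ ε) (hb : 0 < b) (hκE : 0 < κE) (h : ε * b < κE * κI)
    (hE0 : ∀ᶠ t in atTop, 0 ≤ E t) (hI0 : ∀ᶠ t in atTop, 0 ≤ I t)
    (hE : ∀ᶠ t in atTop, HasDerivAt E (E' t) t) (hI : ∀ᶠ t in atTop, HasDerivAt I (I' t) t)
    (hE' : ∀ᶠ t in atTop, E' t ≤ b * I t - κE * E t)
    (hI' : ∀ᶠ t in atTop, I' t ≤ ε * E t - κI * I t) :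
    Tendsto E atTop (𝓝 0) ∧ Tendsto I atTop (𝓝 0) := by
  obtain ⟨p, hp, r, hr, hpI, hpE⟩ := exists_lyapunov_weight hε hb hκE h
  have hW : Tendsto (fun t => p * E t + I t) atTop (𝓝 0) := by
    refine tendsto_zero_of_hasDerivAt_le_sub_mul_s17 (f' := fun t => p * E' t + I' t)
      (g := fun _ => 0) hr ?_ ?_ ?_ tendsto_const_nhds
    · filter_upwards [hE0, hI0] with t hEt hIt
      positivity
    · filter_upwards [hE, hI] with t hEt hIt
      exact (hEt.const_mul p).add hIt
    · filter_upwards [hE0, hI0, hE', hI'] with t hEt hIt hE't hI't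
      linarith [mul_le_mul_of_nonneg_right hpI hIt, mul_le_mul_of_nonneg_right hpE hEt,
        mul_le_mul_of_nonneg_left hE't hp.le]
  refine ⟨squeeze_zero' hE0 ?_ (by simpa using hW.div_const p), squeeze_zero' hI0 ?_ hW⟩
  · filter_upwards [hI0] with t hIt
    rw [le_div_iff₀ hp]
    linarith
  · filter_upwards [hE0] with t hEt
    linarith [mul_nonneg hp.le hEt]

theorem seir_disease_free_convergence_general
    (β γ ε μ B : ℝ) (hβ : 0 < β) (hε : 0 < ε) (hμ : 0 < μ)
    (hB : 0 ≤ B) (hB_small : B < μ * ((γ + μ) * (ε + μ) / (β * ε)))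
    (S E I R : ℝ → ℝ)
    (hS_nonneg : ∀ t ≥ (0:ℝ), 0 ≤ S t)
    (hE_nonneg : ∀ t ≥ (0:ℝ), 0 ≤ E t)
    (hI_nonneg : ∀ t ≥ (0:ℝ), 0 ≤ I t)
    (hR_nonneg : ∀ t ≥ (0:ℝ), 0 ≤ R t)
    (hS : ∀ t ≥ (0:ℝ), HasDerivAt S (B - μ * S t - β * I t * S t) t)
    (hE : ∀ t ≥ (0:ℝ), HasDerivAt E (β * I t * S t - ε * E t - μ * E t) t)
    (hI : ∀ t ≥ (0:ℝ), HasDerivAt I (ε * E t - γ * I t - μ * I t) t)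
    (hR : ∀ t ≥ (0:ℝ), HasDerivAt R (γ * I t - μ * R t) t) :
    Filter.Tendsto (fun t => (S t, E t, I t, R t)) Filter.atTop
      (nhds (B / μ, 0, 0, 0)) := by
  have ev {P : ℝ → Prop} (h : ∀ t ≥ (0:ℝ), P t) : ∀ᶠ t in atTop, P t := eventually_atTop.2 ⟨0, h⟩
  obtain ⟨M, hBM, hMH⟩ := exists_between ((div_lt_iff₀' hμ).2 hB_small)
  have hM : 0 < M := (div_nonneg hB hμ.le).trans_lt hBM
  have hS_upper : ∀ b > B / μ, ∀ᶠ t in atTop, S t < b :=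
    fun b => eventually_lt_of_hasDerivAt_le_sub_mul_s17 (g := fun _ => B) hμ (ev hS)
      (ev fun t ht => by
        linarith [mul_nonneg (mul_nonneg hβ.le (hI_nonneg t ht)) (hS_nonneg t ht)])
      tendsto_const_nhds
  have hIS : ∀ᶠ t in atTop, β * I t * S t ≤ β * M * I t := by
    filter_upwards [hS_upper M hBM, ev hI_nonneg] with t hSt hIt
    linarith [mul_le_mul_of_nonneg_left hSt.le (mul_nonneg hβ.le hIt)]
  obtain ⟨hEt, hIt⟩ := tendsto_zero_of_cooperative_subthreshold (κE := ε + μ) (κI := γ + μ)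
    hε.le (mul_pos hβ hM) (by linarith) (by linarith [(lt_div_iff₀ (mul_pos hβ hε)).1 hMH])
    (ev hE_nonneg) (ev hI_nonneg) (ev hE) (ev hI) (hIS.mono fun t h => by linarith)
    (ev fun t _ => by linarith)
  have hRt : Tendsto R atTop (𝓝 0) :=
    tendsto_zero_of_hasDerivAt_le_sub_mul_s17 hμ (ev hR_nonneg) (ev hR) (ev fun t _ => le_rfl)
      (by simpa using hIt.const_mul γ)
  have hSt : Tendsto S atTop (𝓝 (B / μ)) := by
    refine tendsto_order.2 ⟨fun b hb => ?_, hS_upper⟩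
    have hlow := eventually_lt_of_hasDerivAt_le_sub_mul_s17 (f := fun t => -S t)
      (g := fun t => β * M * I t - B) hμ ((ev hS).mono fun t h => h.neg)
      (hIS.mono fun t h => by linarith) ((hIt.const_mul (β * M)).sub_const B)
      (b := -b) (by rw [mul_zero, zero_sub, neg_div]; linarith)
    exact hlow.mono fun t h => by linarith
  exact hSt.prodMk_nhds (hEt.prodMk_nhds (hIt.prodMk_nhds hRt))

/-- In the SEIR model with constant newborn/immigration rate B < μH,
H = (γ+μ)(ε+μ)/(βε), the solution converges to the disease-free equilibrium
(B/μ, 0, 0, 0). -/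
theorem seir_disease_free_convergence
    (β γ ε μ B : ℝ) (hβ : 0 < β) (hγ : 0 < γ) (hε : 0 < ε) (hμ : 0 < μ)
    (hB : 0 ≤ B) (hB_small : B < μ * ((γ + μ) * (ε + μ) / (β * ε)))
    (S E I R : ℝ → ℝ)
    (hS_nonneg : ∀ t ≥ (0:ℝ), 0 ≤ S t)
    (hE_nonneg : ∀ t ≥ (0:ℝ), 0 ≤ E t)
    (hI_nonneg : ∀ t ≥ (0:ℝ), 0 ≤ I t)
    (hR_nonneg : ∀ t ≥ (0:ℝ), 0 ≤ R t)
    (hS : ∀ t ≥ (0:ℝ), HasDerivAt S (B - μ * S t - β * I t * S t) t)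
    (hE : ∀ t ≥ (0:ℝ), HasDerivAt E (β * I t * S t - ε * E t - μ * E t) t)
    (hI : ∀ t ≥ (0:ℝ), HasDerivAt I (ε * E t - γ * I t - μ * I t) t)
    (hR : ∀ t ≥ (0:ℝ), HasDerivAt R (γ * I t - μ * R t) t) :
    Filter.Tendsto (fun t => (S t, E t, I t, R t)) Filter.atTop
      (nhds (B / μ, 0, 0, 0)) :=
  seir_disease_free_convergence_general β γ ε μ B hβ hε hμ hB hB_small S E I R hS_nonneg hE_nonneg
    hI_nonneg hR_nonneg hS hE hI hR
end
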